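/- arXiv:1604.04271 — 9 statements merged into one kernel-verified Lean document; each statement's English description precedes it below -/
import Mathlib

section
/- Let G be a finite tournament with n ≥ 3 vertices and for each vertex i let d_i denote its out-degree. Then the following are equivalent: (1) G is transitive, i.e. (i,j) ∈ E(G) and (j,k) ∈ E(G) imply (i,k) ∈ E(G); (2) G is acyclic, i.e. G contains no directed cycle C_k with k ≥ 3 as a subgraph; (3) G contains no directed 3-cycle C_3 as a subgraph; (4) the vertices of G can be enumerated v_1, …, v_n so that (v_i, v_j) ∈ E(G) if and only if 1 ≤ i < j ≤ n; (5) ∑_{i=1}^n d_i² = n(n−1)(2n−1)/6; (6) for each k = 1, …, n, the number of injective adjacency-preserving maps from the directed path P_k into G equals binom(n,k); (7) the number of injective adjacency-preserving maps from P_3 into G equals binom(n,3); (8) for each k = 1, …, n, the number of injective adjacency-preserving maps from the transitive tournament T_k into G equals binom(n,k); (9) the number of injective adjacency-preserving maps from T_3 into G equals binom(n,3). -/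
/-!
A transitive tournament is a strict linear order, so an enumeration as in (4) exists,
homomorphisms from `P_k` and `T_k` correspond to strictly increasing maps `Fin k → Fin n` (hence
there are `binom(n,k)` of them), and no cycle maps in.

For the converse let `p`, `t`, `c` count the injective homomorphisms from `P_3`, `T_3`, `C_3`.
Sorting those of `P_3` by their middle vertex and those of `T_3` by their source gives
`p = ∑ d⁻ᵥ dᵥ` and `2t = ∑ dᵥ (dᵥ - 1)`, with in-degrees `d⁻ᵥ = n - 1 - dᵥ`; hence
`2t + p = (n - 2) ∑ dᵥ = 3 binom(n,3)`. A path closes either transitively or cyclically, so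
`p = t + c` and `3t + c = 3 binom(n,3)`. Therefore each of `p = binom(n,3)`, `t = binom(n,3)` and
`∑ dᵥ² = 2t + ∑ dᵥ = n(n-1)(2n-1)/6` is equivalent to `c = 0`, which is (3).
-/

/-- The directed path on `Fin k`: edges `(i, i+1)`. -/
def pathRel (k : ℕ) : Fin k → Fin k → Prop := fun i j => (j : ℕ) = (i : ℕ) + 1

/-- The transitive tournament on `Fin k`: edges `(i, j)` for `i < j`. -/
def transRel (k : ℕ) : Fin k → Fin k → Prop := fun i j => i < j

/-- The directed cycle on `Fin k`: edges `(i, i+1)` together with `(k-1, 0)`. -/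
def cycleRel (k : ℕ) : Fin k → Fin k → Prop :=
  fun i j => (j : ℕ) = (i : ℕ) + 1 ∨ ((i : ℕ) = k - 1 ∧ (j : ℕ) = 0)

/-- The number of injective adjacency-preserving maps from `(A, EA)` into `(B, EB)`. -/
noncomputable def injHomCount {A B : Type} (EA : A → A → Prop) (EB : B → B → Prop) : ℕ :=
  Nat.card {φ : A → B // Function.Injective φ ∧ ∀ a a' : A, EA a a' → EB (φ a) (φ a')}

open Function

def IsInjHom {A B : Type} (EA : A → A → Prop) (EB : B → B → Prop) (φ : A → B) : Prop :=
  Injective φ ∧ ∀ a a', EA a a' → EB (φ a) (φ a')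

lemma injHomCount_eq_card {A B : Type} (EA : A → A → Prop) (EB : B → B → Prop) :
    injHomCount EA EB = Nat.card {φ // IsInjHom EA EB φ} :=
  rfl

lemma six_mul_choose_three (n : ℕ) : 6 * n.choose 3 = n * (n - 1) * (n - 2) := by
  have h := Nat.descFactorial_eq_factorial_mul_choose n 3
  simp only [Nat.descFactorial, Nat.factorial, Nat.sub_zero] at h
  rw [← h]
  ring

lemma mul_mul_div_six_eq (n s : ℕ) (hs : 2 * s = n * (n - 1)) :
    n * (n - 1) * (2 * n - 1) / 6 = 2 * n.choose 3 + s := by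
  have h6 := six_mul_choose_three n
  refine Nat.div_eq_of_eq_mul_left (by norm_num) ?_
  rcases Nat.lt_or_ge n 2 with hn | hn
  · interval_cases n <;> simp_all
  · obtain ⟨m, rfl⟩ : ∃ m, n = m + 2 := ⟨n - 2, by omega⟩
    simp only [Nat.add_sub_cancel, show m + 2 - 1 = m + 1 by omega,
      show 2 * (m + 2) - 1 = 2 * m + 3 by omega] at h6 hs ⊢
    nlinarith

lemma injective_fin_three_iff {α : Type*} {φ : Fin 3 → α} :
    Injective φ ↔ φ 0 ≠ φ 1 ∧ φ 0 ≠ φ 2 ∧ φ 1 ≠ φ 2 := by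
  refine ⟨fun h => ⟨h.ne (by decide), h.ne (by decide), h.ne (by decide)⟩, ?_⟩
  rintro ⟨h01, h02, h12⟩ i j hij
  fin_cases i <;> fin_cases j <;> simp_all [eq_comm]

section RelOnFin

variable {α : Type*} {r : α → α → Prop}

lemma forall_pathRel_three_iff {φ : Fin 3 → α} :
    (∀ i j, pathRel 3 i j → r (φ i) (φ j)) ↔ r (φ 0) (φ 1) ∧ r (φ 1) (φ 2) := by
  simp [Fin.forall_fin_succ, pathRel]

lemma forall_transRel_three_iff {φ : Fin 3 → α} :
    (∀ i j, transRel 3 i j → r (φ i) (φ j)) ↔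
      r (φ 0) (φ 1) ∧ r (φ 0) (φ 2) ∧ r (φ 1) (φ 2) := by
  simp [Fin.forall_fin_succ, transRel, and_assoc]

lemma forall_cycleRel_three_iff {φ : Fin 3 → α} :
    (∀ i j, cycleRel 3 i j → r (φ i) (φ j)) ↔
      r (φ 0) (φ 1) ∧ r (φ 1) (φ 2) ∧ r (φ 2) (φ 0) := by
  simp [Fin.forall_fin_succ, cycleRel]

lemma forall_pathRel_iff_strictMono [Preorder α] {k : ℕ} {g : Fin k → α} :
    (∀ i j, pathRel k i j → g i < g j) ↔ StrictMono g := by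
  cases k with
  | zero => exact ⟨fun _ i => i.elim0, fun _ i => i.elim0⟩
  | succ m =>
    rw [Fin.strictMono_iff_lt_succ]
    refine ⟨fun h i => h _ _ (by simp [pathRel]), fun h i j hij => ?_⟩
    have hij : (j : ℕ) = i + 1 := hij
    obtain ⟨i', rfl⟩ : ∃ i' : Fin m, i = i'.castSucc := ⟨⟨i, by omega⟩, rfl⟩
    obtain rfl : j = i'.succ := Fin.ext hij
    exact h i'

end RelOnFin

section Tournament

variable {V : Type} {E : V → V → Prop}

lemma rel_iff_symm_lt_symm {n : ℕ} (e : Fin n ≃ V) (he : ∀ i j, E (e i) (e j) ↔ i < j)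
    {x y : V} : E x y ↔ e.symm x < e.symm y := by
  simpa using he (e.symm x) (e.symm y)

lemma injHomCount_eq_choose {n k : ℕ} {R : Fin k → Fin k → Prop}
    (hR : ∀ g : Fin k → Fin n, (∀ i j, R i j → g i < g j) ↔ StrictMono g)
    (e : Fin n ≃ V) (he : ∀ i j, E (e i) (e j) ↔ i < j) :
    injHomCount R E = n.choose k := by
  let homEquivEmb : {φ : Fin k → V // IsInjHom R E φ} ≃ (Fin k ↪o Fin n) :=
    { toFun φ := OrderEmbedding.ofStrictMono (e.symm ∘ φ.1)
        ((hR _).1 fun i j h => (rel_iff_symm_lt_symm e he).1 (φ.2.2 i j h))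
      invFun g := ⟨e ∘ g, e.injective.comp g.injective,
        fun i j h => (he _ _).2 ((hR g).2 g.strictMono i j h)⟩
      left_inv φ := Subtype.ext (funext fun i => e.apply_symm_apply _)
      right_inv g := by ext; simp }
  rw [injHomCount_eq_card, Nat.card_congr (homEquivEmb.trans Set.powersetCard.ofFinEmbEquiv),
    Set.powersetCard.card, Nat.card_fin]

lemma not_forall_cycleRel_of_strictMono {β : Type*} [Preorder β] {f : V → β}
    (hf : ∀ a b, E a b → f a < f b) {k : ℕ} (hk : k ≠ 0) (φ : Fin k → V) :
    ¬ ∀ i j, cycleRel k i j → E (φ i) (φ j) := by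
  obtain ⟨m, rfl⟩ := Nat.exists_eq_succ_of_ne_zero hk
  intro hφ
  have hmono : StrictMono (f ∘ φ) :=
    forall_pathRel_iff_strictMono.1 fun i j h => hf _ _ (hφ i j (Or.inl h))
  have hclose : f (φ (Fin.last m)) < f (φ 0) := hf _ _ (hφ _ _ (Or.inr ⟨by simp, rfl⟩))
  exact hclose.not_ge (hmono.monotone (Fin.zero_le _))

variable [Std.Asymm E]

lemma injective_fin_three_of_rel {φ : Fin 3 → V} (h01 : E (φ 0) (φ 1)) (h12 : E (φ 1) (φ 2)) :
    Injective φ :=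
  injective_fin_three_iff.2
    ⟨ne_of_irrefl h01, fun h02 => asymm (h02 ▸ h01) h12, ne_of_irrefl h12⟩

lemma isInjHom_pathRel_three_iff {φ : Fin 3 → V} :
    IsInjHom (pathRel 3) E φ ↔ E (φ 0) (φ 1) ∧ E (φ 1) (φ 2) := by
  rw [IsInjHom, forall_pathRel_three_iff]
  exact ⟨And.right, fun h => ⟨injective_fin_three_of_rel h.1 h.2, h⟩⟩

lemma isInjHom_transRel_three_iff {φ : Fin 3 → V} :
    IsInjHom (transRel 3) E φ ↔ E (φ 0) (φ 1) ∧ E (φ 0) (φ 2) ∧ E (φ 1) (φ 2) := by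
  rw [IsInjHom, forall_transRel_three_iff]
  exact ⟨And.right, fun h => ⟨injective_fin_three_of_rel h.1 h.2.2, h⟩⟩

lemma isInjHom_cycleRel_three_iff {φ : Fin 3 → V} :
    IsInjHom (cycleRel 3) E φ ↔ E (φ 0) (φ 1) ∧ E (φ 1) (φ 2) ∧ E (φ 2) (φ 0) := by
  rw [IsInjHom, forall_cycleRel_three_iff]
  exact ⟨And.right, fun h => ⟨injective_fin_three_of_rel h.1 h.2.1, h⟩⟩

lemma injHomCount_pathRel_three [Fintype V] :
    injHomCount (pathRel 3) E = ∑ v, Nat.card {u // E u v} * Nat.card {w // E v w} := by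
  let pathEquiv : {φ : Fin 3 → V // IsInjHom (pathRel 3) E φ} ≃ Σ v, {u // E u v} × {w // E v w} :=
    { toFun φ := ⟨φ.1 1, ⟨φ.1 0, (isInjHom_pathRel_three_iff.1 φ.2).1⟩,
        ⟨φ.1 2, (isInjHom_pathRel_three_iff.1 φ.2).2⟩⟩
      invFun p := ⟨![p.2.1, p.1, p.2.2], isInjHom_pathRel_three_iff.2 ⟨p.2.1.2, p.2.2.2⟩⟩
      left_inv φ := Subtype.ext (funext fun i => by fin_cases i <;> rfl)
      right_inv _ := rfl }
  simp only [injHomCount_eq_card, Nat.card_congr pathEquiv, Nat.card_sigma, Nat.card_prod]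

variable [Std.Trichotomous E]

lemma rel_trans_of_not_exists_cycleRel_three
    (h : ¬ ∃ φ : Fin 3 → V, IsInjHom (cycleRel 3) E φ)
    {a b c : V} (hab : E a b) (hbc : E b c) : E a c := by
  by_contra hac
  have hca : E c a := ((trichotomous_of E a c).resolve_left hac).resolve_left
    fun hac => asymm hab (hac ▸ hbc)
  exact h ⟨![a, b, c], isInjHom_cycleRel_three_iff.2 ⟨hab, hbc, hca⟩⟩

lemma exists_equiv_fin_rel_iff_lt [Fintype V] [IsTrans V E] :
    ∃ e : Fin (Nat.card V) ≃ V, ∀ i j, E (e i) (e j) ↔ i < j := by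
  classical
  have : IsStrictTotalOrder V E := {}
  let := linearOrderOfSTO E
  let e := Fintype.orderIsoFinOfCardEq V Nat.card_eq_fintype_card.symm
  exact ⟨e.toEquiv, fun i j => e.lt_iff_lt⟩

lemma two_mul_card_rel [Finite V] :
    2 * Nat.card {q : V × V // E q.1 q.2} = Nat.card V * (Nat.card V - 1) := by
  classical
  have : Fintype V := Fintype.ofFinite V
  have hswap : Nat.card {q : V × V // E q.2 q.1} = Nat.card {q : V × V // E q.1 q.2} :=
    Nat.card_congr ((Equiv.prodComm V V).subtypeEquiv fun _ => Iff.rfl)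
  have hdisj : Disjoint (fun q : V × V => E q.1 q.2) (fun q => E q.2 q.1) := by
    rw [disjoint_iff_inf_le]
    rintro q ⟨h, h'⟩
    exact asymm h h'
  have hne : {q : V × V // E q.1 q.2 ∨ E q.2 q.1} ≃ {q : V × V // q.1 ≠ q.2} :=
    Equiv.subtypeEquivRight fun q => ⟨fun h => h.elim ne_of_irrefl ne_of_irrefl',
      fun h => (trichotomous_of E q.1 q.2).imp_right (Or.resolve_left · h)⟩
  have hoff : Nat.card {q : V × V // q.1 ≠ q.2} = Nat.card V * (Nat.card V - 1) := by
    rw [Nat.card_eq_fintype_card, Fintype.card_subtype, Nat.card_eq_fintype_card,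
      Nat.mul_sub_one, ← Finset.card_univ, ← Finset.offDiag_card]
    congr 1
    ext q
    simp
  rw [← hoff, ← Nat.card_congr hne, two_mul]
  nth_rw 2 [← hswap]
  simp only [Nat.card_eq_fintype_card]
  rw [Fintype.card_subtype_or_disjoint _ _ hdisj]

variable [Fintype V]

lemma two_mul_sum_card_rel_right :
    2 * ∑ v, Nat.card {w // E v w} = Nat.card V * (Nat.card V - 1) := by
  rw [← Nat.card_sigma, ← Nat.card_congr (Equiv.subtypeProdEquivSigmaSubtype E),
    two_mul_card_rel]

lemma card_rel_left_add_card_rel_right (v : V) :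
    Nat.card {u // E u v} + Nat.card {w // E v w} = Nat.card V - 1 := by
  classical
  have hdisj : Disjoint (fun u => E u v) (fun w => E v w) := by
    rw [disjoint_iff_inf_le]
    rintro u ⟨h, h'⟩
    exact asymm h h'
  have hne : {u // E u v ∨ E v u} ≃ {u // u ≠ v} :=
    Equiv.subtypeEquivRight fun u => ⟨fun h => h.elim ne_of_irrefl ne_of_irrefl',
      fun h => (trichotomous_of E u v).imp_right (Or.resolve_left · h)⟩
  simp only [Nat.card_eq_fintype_card]
  rw [← Fintype.card_subtype_or_disjoint _ _ hdisj, Fintype.card_congr hne]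
  exact Set.card_ne_eq v

lemma two_mul_injHomCount_transRel_three :
    2 * injHomCount (transRel 3) E =
      ∑ v, Nat.card {w // E v w} * (Nat.card {w // E v w} - 1) := by
  let transEquiv : {φ : Fin 3 → V // IsInjHom (transRel 3) E φ} ≃
      Σ v, {q : {w // E v w} × {w // E v w} // Subrel E (E v) q.1 q.2} :=
    { toFun φ := ⟨φ.1 0, (⟨φ.1 1, (isInjHom_transRel_three_iff.1 φ.2).1⟩,
        ⟨φ.1 2, (isInjHom_transRel_three_iff.1 φ.2).2.1⟩), (isInjHom_transRel_three_iff.1 φ.2).2.2⟩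
      invFun p := ⟨![p.1, p.2.1.1, p.2.1.2],
        isInjHom_transRel_three_iff.2 ⟨p.2.1.1.2, p.2.1.2.2, p.2.2⟩⟩
      left_inv φ := Subtype.ext (funext fun i => by fin_cases i <;> rfl)
      right_inv _ := rfl }
  rw [injHomCount_eq_card, Nat.card_congr transEquiv, Nat.card_sigma, Finset.mul_sum]
  exact Finset.sum_congr rfl fun v _ => two_mul_card_rel (E := Subrel E (E v))

lemma injHomCount_pathRel_three_eq_add :
    injHomCount (pathRel 3) E = injHomCount (transRel 3) E + injHomCount (cycleRel 3) E := by
  classical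
  have hsplit : ∀ φ : Fin 3 → V,
      IsInjHom (pathRel 3) E φ ↔ IsInjHom (transRel 3) E φ ∨ IsInjHom (cycleRel 3) E φ := by
    intro φ
    rw [isInjHom_pathRel_three_iff, isInjHom_transRel_three_iff, isInjHom_cycleRel_three_iff]
    refine ⟨fun ⟨h01, h12⟩ => ?_, by rintro (h | h); exacts [⟨h.1, h.2.2⟩, ⟨h.1, h.2.1⟩]⟩
    rcases trichotomous_of E (φ 0) (φ 2) with h02 | h02 | h20
    · exact .inl ⟨h01, h02, h12⟩
    · exact absurd (h02 ▸ h01) (asymm h12)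
    · exact .inr ⟨h01, h12, h20⟩
  have hdisj : Disjoint (IsInjHom (transRel 3) E) (IsInjHom (cycleRel 3) E) := by
    rw [disjoint_iff_inf_le]
    rintro φ ⟨hT, hC⟩
    exact asymm (isInjHom_transRel_three_iff.1 hT).2.1 (isInjHom_cycleRel_three_iff.1 hC).2.2
  simp only [injHomCount_eq_card, Nat.card_eq_fintype_card]
  rw [← Fintype.card_subtype_or_disjoint _ _ hdisj]
  exact Fintype.card_congr (Equiv.subtypeEquivRight hsplit)

lemma three_mul_injHomCount_transRel_add_cycleRel :
    3 * injHomCount (transRel 3) E + injHomCount (cycleRel 3) E = 3 * (Nat.card V).choose 3 := by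
  set n := Nat.card V
  set S := ∑ v, Nat.card {w // E v w}
  have hpath : 2 * injHomCount (transRel 3) E + injHomCount (pathRel 3) E = (n - 2) * S := by
    rw [two_mul_injHomCount_transRel_three, injHomCount_pathRel_three, ← Finset.sum_add_distrib,
      Finset.mul_sum]
    refine Finset.sum_congr rfl fun v _ => ?_
    have hdeg := card_rel_left_add_card_rel_right (E := E) v
    generalize Nat.card {u // E u v} = i, Nat.card {w // E v w} = d at hdeg ⊢
    rcases d with _ | d
    · simp
    · rw [show n - 2 = i + d by omega]
      simp only [Nat.add_sub_cancel]
      ring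
  rw [injHomCount_pathRel_three_eq_add] at hpath
  have : 2 * (3 * injHomCount (transRel 3) E + injHomCount (cycleRel 3) E) =
      2 * (3 * n.choose 3) :=
    calc _ = 2 * ((n - 2) * S) := by rw [← hpath]; ring
      _ = (n - 2) * (n * (n - 1)) := by rw [← two_mul_sum_card_rel_right (E := E)]; ring
      _ = 2 * (3 * n.choose 3) := by
        rw [show 2 * (3 * n.choose 3) = 6 * n.choose 3 by ring, six_mul_choose_three]; ring
  omega

lemma sum_sq_card_rel_right :
    ∑ v, Nat.card {w // E v w} ^ 2 =
      2 * injHomCount (transRel 3) E + ∑ v, Nat.card {w // E v w} := by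
  rw [two_mul_injHomCount_transRel_three, ← Finset.sum_add_distrib]
  refine Finset.sum_congr rfl fun v _ => ?_
  rcases Nat.card {w // E v w} with _ | d
  · simp
  · simp only [Nat.add_sub_cancel]
    ring

end Tournament

/-- Moon's characterisation of transitive finite tournaments. -/
theorem stmt0 {V : Type} [Fintype V] (E : V → V → Prop)
    (hirr : ∀ v : V, ¬ E v v)
    (htot : ∀ u v : V, u ≠ v → (E u v ↔ ¬ E v u))
    (n : ℕ) (hn : n = Fintype.card V) (hn3 : 3 ≤ n)
    (d : V → ℕ) (hd : ∀ v : V, d v = Nat.card {w : V // E v w}) :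
    List.TFAE
      [ -- (1) transitive
        (∀ i j k : V, E i j → E j k → E i k),
        -- (2) acyclic: no directed cycle `C_k`, `k ≥ 3`, as a subgraph
        (∀ k : ℕ, 3 ≤ k → ¬ ∃ φ : Fin k → V, Function.Injective φ ∧
            ∀ i j : Fin k, cycleRel k i j → E (φ i) (φ j)),
        -- (3) no directed 3-cycle
        (¬ ∃ φ : Fin 3 → V, Function.Injective φ ∧
            ∀ i j : Fin 3, cycleRel 3 i j → E (φ i) (φ j)),
        -- (4) vertices can be enumerated compatibly with the edges
        (∃ e : Fin n ≃ V, ∀ i j : Fin n, E (e i) (e j) ↔ i < j),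
        -- (5) sum of squared out-degrees
        (∑ v : V, (d v) ^ 2 = n * (n - 1) * (2 * n - 1) / 6),
        -- (6) counts of paths `P_k`
        (∀ k : ℕ, 1 ≤ k → k ≤ n → injHomCount (pathRel k) E = Nat.choose n k),
        -- (7) count of `P_3`
        (injHomCount (pathRel 3) E = Nat.choose n 3),
        -- (8) counts of transitive tournaments `T_k`
        (∀ k : ℕ, 1 ≤ k → k ≤ n → injHomCount (transRel k) E = Nat.choose n k),
        -- (9) count of `T_3`
        (injHomCount (transRel 3) E = Nat.choose n 3) ] := by
  have : Std.Asymm E := ⟨fun a b hab hba => by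
    obtain rfl | hne := eq_or_ne a b
    exacts [hirr a hab, (htot a b hne).1 hab hba]⟩
  have : Std.Trichotomous E :=
    ⟨fun a b hab hba => by_contra fun hne => hab ((htot a b hne).2 hba)⟩
  rw [← Nat.card_eq_fintype_card] at hn
  subst hn
  obtain rfl : d = fun v => Nat.card {w // E v w} := funext hd
  have hkey := three_mul_injHomCount_transRel_add_cycleRel (E := E)
  have hc3 : (¬ ∃ φ : Fin 3 → V, Injective φ ∧ ∀ i j, cycleRel 3 i j → E (φ i) (φ j)) ↔
      injHomCount (cycleRel 3) E = 0 := by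
    rw [injHomCount, Finite.card_eq_zero_iff, isEmpty_subtype, not_exists]
  tfae_have 1 → 4 := fun htrans =>
    have : IsTrans V E := ⟨htrans⟩
    exists_equiv_fin_rel_iff_lt
  tfae_have 4 → 2 := fun ⟨e, he⟩ k hk ⟨φ, _, hφ⟩ =>
    not_forall_cycleRel_of_strictMono (f := e.symm) (fun _ _ => (rel_iff_symm_lt_symm e he).1)
      (by omega) φ hφ
  tfae_have 2 → 3 := fun h => h 3 le_rfl
  tfae_have 3 → 1 := fun h3 _ _ _ => rel_trans_of_not_exists_cycleRel_three h3
  tfae_have 4 → 6 := fun ⟨e, he⟩ k _ _ =>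
    injHomCount_eq_choose (fun _ => forall_pathRel_iff_strictMono) e he
  tfae_have 6 → 7 := fun h => h 3 (by norm_num) hn3
  tfae_have 7 → 3 := by rw [hc3, injHomCount_pathRel_three_eq_add]; omega
  tfae_have 4 → 8 := fun ⟨e, he⟩ k _ _ => injHomCount_eq_choose (fun _ => Iff.rfl) e he
  tfae_have 8 → 9 := fun h => h 3 (by norm_num) hn3
  tfae_have 9 → 3 := by rw [hc3]; omega
  tfae_have 3 ↔ 5 := by
    rw [hc3, sum_sq_card_rel_right, mul_mul_div_six_eq _ _ (two_mul_sum_card_rel_right (E := E))]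
    omega
  tfae_finish
end

section
/- Let G be a countable tournament. Then there exists a countable linearly ordered set Q and pairwise disjoint induced subtournaments {G_i}_{i∈Q} with ⋃_{i∈Q} V(G_i) = V(G) such that G = ⊕_{i∈Q} G_i and each G_i is irreducible. Moreover, this decomposition is unique up to order isomorphism of Q: if G is also isomorphic to ⊕_{j∈Q'} G'_j with each G'_j irreducible, then any isomorphism between the two tournaments induces an order isomorphism f: Q → Q' such that G_i is isomorphic to G'_{f(i)} for every i ∈ Q. -/
/-- `E` is the edge relation of a tournament: irreflexive, and between any two distinct
vertices exactly one direction is present. -/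
def IsTournament {V : Type*} (E : V → V → Prop) : Prop :=
  (∀ v : V, ¬ E v v) ∧ ∀ u v : V, u ≠ v → (E u v ↔ ¬ E v u)

/-- A tournament is irreducible if it is not the direct sum of two nonempty induced
subtournaments (all cross edges directed from the first to the second). -/
def TourIrreducible {V : Type*} (E : V → V → Prop) : Prop :=
  ¬ ∃ B : Set V, B.Nonempty ∧ Bᶜ.Nonempty ∧ ∀ v ∈ B, ∀ w ∈ Bᶜ, E v w

/-- `part : V → Q` exhibits the tournament `(V, E)` as the direct sum, over the linearly
ordered set `Q`, of the (nonempty) induced subtournaments on its fibres, each of which is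
irreducible; all edges between distinct fibres point from the smaller index to the larger. -/
def IsIrredDecomp {V Q : Type*} [LinearOrder Q] (E : V → V → Prop) (part : V → Q) : Prop :=
  Function.Surjective part ∧
  (∀ i : Q, TourIrreducible (fun v w : {x : V // part x = i} => E v.1 w.1)) ∧
  (∀ v w : V, part v < part w → E v w)


/-!
Call a set `B` of vertices a *cut* if every edge between `B` and its complement leaves `B`;
the cuts are exactly the first summands of the splittings `G = G[B] ⊕ G[Bᶜ]`. In a tournament
any two cuts are comparable under inclusion, so "every cut containing `w` contains `v`" is a
total preorder on the vertices. Its classes, ordered by it, are the summands of the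
decomposition: a cut splitting a class would separate two vertices that no cut separates.
Conversely, in any irreducible decomposition no cut can split a summand, so the order of
the summands is again this preorder, which depends only on the tournament; this gives
uniqueness.
-/

open Function

universe u

theorem exists_linearOrder_surjective_le_iff {α : Type u} (r : α → α → Prop)
    (refl : ∀ a, r a a) (trans : ∀ a b c, r a b → r b c → r a c)
    (total : ∀ a b, r a b ∨ r b a) :
    ∃ (Q : Type u) (_ : LinearOrder Q) (p : α → Q), Surjective p ∧ ∀ a b, p a ≤ p b ↔ r a b := by
  classical
  let : Preorder α := { le := r, le_refl := refl, le_trans := trans }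
  have : @Std.Total α (· ≤ ·) := ⟨total⟩
  exact ⟨Antisymmetrization α (· ≤ ·), inferInstance, toAntisymmetrization (· ≤ ·),
    Quotient.mk_surjective, fun _ _ => Iff.rfl⟩

theorem exists_orderIso_apply_eq {α Q Q' : Type*} [PartialOrder Q] [PartialOrder Q']
    {p : α → Q} {p' : α → Q'} (hp : Surjective p) (hp' : Surjective p')
    (hle : ∀ a b, p a ≤ p b ↔ p' a ≤ p' b) :
    ∃ f : Q ≃o Q', ∀ a, p' a = f (p a) := by
  set f : Q → Q' := fun q => p' (surjInv hp q)
  have hf : ∀ a, f (p a) = p' a := fun a =>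
    have h := surjInv_eq hp (p a)
    le_antisymm ((hle _ _).1 h.le) ((hle _ _).1 h.ge)
  have hf_le : ∀ q r, f q ≤ f r ↔ q ≤ r := by
    intro q r
    obtain ⟨a, rfl⟩ := hp q
    obtain ⟨b, rfl⟩ := hp r
    rw [hf, hf, hle]
  have hf_surj : Surjective f := fun q' => by
    obtain ⟨a, rfl⟩ := hp' q'
    exact ⟨p a, hf a⟩
  exact ⟨.ofSurjective (.ofMapLEIff f hf_le) hf_surj, fun a => (hf a).symm⟩

section Cuts

variable {V : Type*} (E : V → V → Prop)

def IsCut (B : Set V) : Prop := ∀ v ∈ B, ∀ w ∈ Bᶜ, E v w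

def CutLE (v w : V) : Prop := ∀ B : Set V, IsCut E B → w ∈ B → v ∈ B

variable {E}

theorem IsTournament.isCut_subset_or_subset (hT : IsTournament E) {B C : Set V}
    (hB : IsCut E B) (hC : IsCut E C) : B ⊆ C ∨ C ⊆ B := by
  by_contra! h
  obtain ⟨⟨x, hxB, hxC⟩, ⟨y, hyC, hyB⟩⟩ := And.imp Set.not_subset.1 Set.not_subset.1 h
  have hxy : x ≠ y := by rintro rfl; exact hxC hyC
  exact (hT.2 x y hxy).1 (hB x hxB y hyB) (hC y hyC x hxC)

theorem IsTournament.cutLE_total (hT : IsTournament E) (v w : V) :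
    CutLE E v w ∨ CutLE E w v := by
  by_contra! h
  simp only [CutLE, not_forall, exists_prop] at h
  obtain ⟨⟨B, hB, hwB, hvB⟩, ⟨C, hC, hvC, hwC⟩⟩ := h
  rcases hT.isCut_subset_or_subset hB hC with hBC | hCB
  · exact hwC (hBC hwB)
  · exact hvB (hCB hvC)

theorem isCut_preimage_iff {V' : Type*} {E' : V' → V' → Prop} (g : V ≃ V')
    (hg : ∀ v w, E v w ↔ E' (g v) (g w)) {B' : Set V'} :
    IsCut E (g ⁻¹' B') ↔ IsCut E' B' := by
  refine ⟨fun hB v' hv' w' hw' => ?_, fun hB' v hv w hw => (hg v w).2 (hB' _ hv _ hw)⟩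
  obtain ⟨v, rfl⟩ := g.surjective v'
  obtain ⟨w, rfl⟩ := g.surjective w'
  exact (hg v w).1 (hB v hv' w hw')

theorem cutLE_apply_iff {V' : Type*} {E' : V' → V' → Prop} (g : V ≃ V')
    (hg : ∀ v w, E v w ↔ E' (g v) (g w)) {v w : V} :
    CutLE E' (g v) (g w) ↔ CutLE E v w := by
  refine ⟨fun h B hB hw => ?_, fun h B' hB' hw => h _ ((isCut_preimage_iff g hg).2 hB') hw⟩
  have hB' : IsCut E' (g.symm ⁻¹' B) := by
    rwa [← isCut_preimage_iff g hg, ← Set.preimage_comp, g.symm_comp_self, Set.preimage_id]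
  simpa using h _ hB' (by simpa using hw)

end Cuts

section Decomp

variable {V Q : Type*} [LinearOrder Q] {E : V → V → Prop} {part : V → Q}

theorem IsIrredDecomp.isCut_setOf_le (hD : IsIrredDecomp E part) (q : Q) :
    IsCut E {x | part x ≤ q} :=
  fun _ hv _ hw => hD.2.2 _ _ (lt_of_le_of_lt hv (not_le.1 hw))

theorem IsIrredDecomp.lt_of_isCut (hT : IsTournament E) (hD : IsIrredDecomp E part)
    {B : Set V} (hB : IsCut E B) {v w : V} (hv : v ∈ B) (hw : w ∉ B) : part v < part w := by
  rcases lt_trichotomy (part v) (part w) with hlt | heq | hgt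
  · exact hlt
  · exact (hD.2.1 (part v) ⟨{x | x.1 ∈ B}, ⟨⟨v, rfl⟩, hv⟩, ⟨⟨w, heq.symm⟩, hw⟩,
      fun x hx y hy => hB x hx y hy⟩).elim
  · have hvw : v ≠ w := by rintro rfl; exact hw hv
    exact ((hT.2 v w hvw).1 (hB v hv w hw) (hD.2.2 w v hgt)).elim

theorem IsIrredDecomp.le_iff_cutLE (hT : IsTournament E) (hD : IsIrredDecomp E part)
    {v w : V} : part v ≤ part w ↔ CutLE E v w := by
  refine ⟨fun h B hB hw => ?_, fun h => ?_⟩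
  · by_contra hv
    exact (hD.lt_of_isCut hT hB hw hv).not_ge h
  · by_contra hlt
    exact hlt (h _ (hD.isCut_setOf_le (part w)) le_rfl)

theorem rel_of_lt_of_le_iff_cutLE (hle : ∀ v w, part v ≤ part w ↔ CutLE E v w) {v w : V}
    (hvw : part v < part w) : E v w := by
  have h : ¬ CutLE E w v := by rw [← hle]; exact hvw.not_ge
  simp only [CutLE, not_forall, exists_prop] at h
  obtain ⟨B, hB, hvB, hwB⟩ := h
  exact hB v hvB w hwB

theorem tourIrreducible_fibre_of_le_iff_cutLE (hle : ∀ v w, part v ≤ part w ↔ CutLE E v w)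
    (i : Q) : TourIrreducible (fun v w : {x : V // part x = i} => E v.1 w.1) := by
  rintro ⟨S, ⟨s, hs⟩, ⟨t, ht⟩, hS⟩
  -- the vertices below the fibre, together with `S`, would form a cut separating `s` from `t`
  set B : Set V := {x | part x < i} ∪ Subtype.val '' S
  have hB : IsCut E B := by
    rintro x hx y hy
    simp only [B, Set.mem_compl_iff, Set.mem_union, Set.mem_ofPred_eq, not_or, not_lt] at hy
    obtain ⟨hiy, hyS⟩ := hy
    rcases hx with hx | ⟨u, hu, rfl⟩
    · exact rel_of_lt_of_le_iff_cutLE hle (hx.trans_le hiy)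
    · rcases hiy.eq_or_lt with rfl | hlt
      · exact hS u hu ⟨y, rfl⟩ fun hy => hyS ⟨_, hy, rfl⟩
      · exact rel_of_lt_of_le_iff_cutLE hle (u.2.trans_lt hlt)
  have htB : t.1 ∉ B := by
    rintro (h | ⟨u, hu, hut⟩)
    · exact (ne_of_lt h) t.2
    · exact ht (Subtype.ext hut ▸ hu)
  exact htB ((hle t s).1 (t.2.trans s.2.symm).le B hB (Or.inr ⟨s, hs, rfl⟩))

theorem isIrredDecomp_of_le_iff_cutLE (hsurj : Surjective part)
    (hle : ∀ v w, part v ≤ part w ↔ CutLE E v w) : IsIrredDecomp E part :=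
  ⟨hsurj, tourIrreducible_fibre_of_le_iff_cutLE hle,
    fun _ _ => rel_of_lt_of_le_iff_cutLE hle⟩

end Decomp

/-- Every countable tournament decomposes as a direct sum of irreducible subtournaments
over a countable linearly ordered index set, uniquely up to order isomorphism: any
isomorphism with another such decomposed tournament induces an order isomorphism of the
index sets matching up the components. -/
theorem stmt2 {V : Type} [Countable V] (E : V → V → Prop) (hT : IsTournament E) :
    ∃ (Q : Type) (_ : LinearOrder Q) (part : V → Q),
      Countable Q ∧ IsIrredDecomp E part ∧
      (∀ (V' : Type) (E' : V' → V' → Prop) (Q' : Type) (_ : LinearOrder Q')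
          (part' : V' → Q'),
        IsTournament E' → IsIrredDecomp E' part' →
        ∀ g : V ≃ V', (∀ v w : V, E v w ↔ E' (g v) (g w)) →
        ∃ f : Q ≃o Q', ∀ v : V, part' (g v) = f (part v)) := by
  obtain ⟨Q, _, part, hsurj, hle⟩ := exists_linearOrder_surjective_le_iff (CutLE E)
    (fun _ _ _ => id) (fun _ _ _ hab hbc B hB hc => hab B hB (hbc B hB hc)) hT.cutLE_total
  refine ⟨Q, _, part, hsurj.countable, isIrredDecomp_of_le_iff_cutLE hsurj hle, ?_⟩
  intro V' E' Q' _ part' hT' hD' g hg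
  refine exists_orderIso_apply_eq hsurj (hD'.1.comp g.surjective) fun v w => ?_
  rw [hle, hD'.le_iff_cutLE hT', cutLE_apply_iff g hg]
end

section
/- Let G be a countable tournament. Then there exists a countable linearly ordered set Q partitioned into disjoint subsets Q_1, Q_2, I, and pairwise disjoint induced subtournaments {G_i}_{i∈Q} with ⋃_{i∈Q} V(G_i) = V(G), such that G = ⊕_{i∈Q} G_i, where each G_i with i ∈ Q_1 is irreducible with at least two vertices, each G_i with i ∈ Q_2 is transitive with at least two vertices, each G_i with i ∈ I is a single vertex, and for any i < j in Q_2 ∪ I there exists k ∈ Q_1 with i < k < j. This decomposition is unique up to order isomorphism of Q. -/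
/-- `part : V → Q` exhibits `(V, E)` as a direct sum over the linearly ordered set `Q`,
partitioned into `Q1` (irreducible components with at least two vertices), `Q2`
(transitive components with at least two vertices) and `I` (singleton components),
with no two `Q2 ∪ I`-indices adjacent without a `Q1`-index strictly between them. -/
def IsRefinedDecomp {V Q : Type*} [LinearOrder Q] (E : V → V → Prop) (part : V → Q)
    (Q1 Q2 I : Set Q) : Prop :=
  Function.Surjective part ∧
  Q1 ∪ Q2 ∪ I = Set.univ ∧ Q1 ∩ Q2 = ∅ ∧ Q1 ∩ I = ∅ ∧ Q2 ∩ I = ∅ ∧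
  (∀ v w : V, part v < part w → E v w) ∧
  (∀ i ∈ Q1, TourIrreducible (fun v w : {x : V // part x = i} => E v.1 w.1) ∧
    ∃ v w : V, part v = i ∧ part w = i ∧ v ≠ w) ∧
  (∀ i ∈ Q2, (∀ u v w : V, part u = i → part v = i → part w = i →
      E u v → E v w → E u w) ∧ ∃ v w : V, part v = i ∧ part w = i ∧ v ≠ w) ∧
  (∀ i ∈ I, ∃! v : V, part v = i) ∧
  (∀ i ∈ Q2 ∪ I, ∀ j ∈ Q2 ∪ I, i < j → ∃ k ∈ Q1, i < k ∧ k < j)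

/-! Reachability `ReflTransGen E` is a total preorder on a tournament, and its equivalence classes
are the strong components. Call a strong component trivial if it is a single vertex. Two vertices
belong to the same piece of the decomposition if they lie in the same strong component, or if
every vertex between them (for reachability) is a trivial strong component; the pieces are the
nontrivial strong components, which are irreducible, together with the maximal runs of trivial
strong components, which are transitive because a cycle would create a nontrivial component.

Conversely, in any decomposition of the required shape a `Q1`-piece is a strong component, since
an irreducible tournament is strongly connected; every other piece consists of trivial strong
components, since a transitive tournament has no cycle; and the separation condition forbids two
non-`Q1` pieces with only trivial strong components between them. So the pieces of any such
decomposition are the classes above, which determines it up to an order isomorphism. -/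

open Relation Function

namespace Relation.ReflTransGen

variable {α : Type*} {r : α → α → Prop}

theorem exists_edge_into {B : Set α} {a b : α} (h : ReflTransGen r a b) (ha : a ∉ B)
    (hb : b ∈ B) : ∃ x ∉ B, ∃ y ∈ B, r x y := by
  induction h with
  | refl => exact absurd hb ha
  | @tail y z _ hyz ih =>
    by_cases hy : y ∈ B
    · exact ih hy
    · exact ⟨y, hy, z, hb, hyz⟩

theorem restrict {p : α → Prop} {a b : {x // p x}}
    (hp : ∀ x, ReflTransGen r a x → ReflTransGen r x b → p x) (h : ReflTransGen r a b) :
    ReflTransGen (fun x y : {x // p x} => r x y) a b := by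
  obtain ⟨a, ha⟩ := a
  obtain ⟨b, hb⟩ := b
  dsimp only at hp h
  induction h using ReflTransGen.head_induction_on with
  | refl => exact .refl
  | head hac hcb ih =>
    have hc := hp _ (.single hac) hcb
    exact .head hac (ih hc fun x hcx hxb => hp x (.head hac hcx) hxb)

end Relation.ReflTransGen

theorem image_eq_of_forall_mem_iff {α β γ : Type*} {g : α → β} {g' : α → γ} {f : β → γ}
    (hg : Surjective g) (hg' : Surjective g') (hf : ∀ a, g' a = f (g a)) {S : Set β}
    {S' : Set γ} (h : ∀ a, g a ∈ S ↔ g' a ∈ S') : f '' S = S' := by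
  ext y
  obtain ⟨a, rfl⟩ := hg' y
  constructor
  · rintro ⟨b, hb, hba⟩
    obtain ⟨a', rfl⟩ := hg b
    rw [← hf] at hba
    exact hba ▸ (h a').1 hb
  · exact fun ha => ⟨g a, (h a).2 ha, (hf a).symm⟩

namespace IsTournament

variable {V : Type*} {E : V → V → Prop}

theorem asymm (hT : IsTournament E) {x y : V} (h : E x y) : ¬ E y x := by
  rcases eq_or_ne x y with rfl | hne
  · exact fun _ => hT.1 x h
  · exact (hT.2 x y hne).1 h

theorem edge_or_edge (hT : IsTournament E) {x y : V} (hne : x ≠ y) : E x y ∨ E y x :=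
  or_iff_not_imp_left.2 fun h => by_contra fun h' => h ((hT.2 x y hne).2 h')

theorem comap (hT : IsTournament E) {W : Type*} {f : W → V} (hf : Injective f) :
    IsTournament (fun a b => E (f a) (f b)) :=
  ⟨fun a => hT.1 (f a), fun _ _ hne => hT.2 _ _ (hf.ne hne)⟩

theorem reach_total (hT : IsTournament E) (x y : V) :
    ReflTransGen E x y ∨ ReflTransGen E y x := by
  rcases eq_or_ne x y with rfl | hne
  · exact .inl .refl
  · exact (hT.edge_or_edge hne).imp .single .single

theorem tourIrreducible_iff (hT : IsTournament E) :
    TourIrreducible E ↔ ∀ a b, ReflTransGen E a b := by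
  constructor
  · intro hirr a b
    by_contra hab
    refine hirr ⟨{x | ¬ ReflTransGen E a x}, ⟨b, hab⟩, ⟨a, not_not_intro .refl⟩, ?_⟩
    intro x hx y hy
    have hay : ReflTransGen E a y := not_not.1 hy
    have hne : x ≠ y := fun hxy => hx (hxy ▸ hay)
    exact (hT.edge_or_edge hne).resolve_right fun hyx => hx (hay.tail hyx)
  · rintro hreach ⟨B, ⟨b, hb⟩, ⟨a, ha⟩, hB⟩
    obtain ⟨x, hx, y, hy, hxy⟩ := (hreach a b).exists_edge_into ha hb
    exact hT.asymm hxy (hB y hy x hx)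

end IsTournament

section Components

variable {V : Type*} (E : V → V → Prop)

def IsTrivialSCC (v : V) : Prop :=
  ∀ u, AntisymmRel (ReflTransGen E) v u → u = v

def IsBetween (v w u : V) : Prop :=
  (ReflTransGen E v u ∧ ReflTransGen E u w) ∨ (ReflTransGen E w u ∧ ReflTransGen E u v)

def SameComponent (v w : V) : Prop :=
  AntisymmRel (ReflTransGen E) v w ∨ ∀ u, IsBetween E v w u → IsTrivialSCC E u

variable {E} {u v w x : V}

theorem not_isTrivialSCC_iff :
    ¬ IsTrivialSCC E v ↔ ∃ u, AntisymmRel (ReflTransGen E) v u ∧ u ≠ v := by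
  simp only [IsTrivialSCC, not_forall, exists_prop]

theorem IsTrivialSCC.edge_trans (hT : IsTournament E) (hu : IsTrivialSCC E u) (huv : E u v)
    (hvw : E v w) : E u w := by
  have hne : u ≠ w := by
    rintro rfl
    exact hT.asymm huv hvw
  refine (hT.edge_or_edge hne).resolve_right fun hwu => ?_
  have hvu : v = u := hu v ⟨.single huv, (ReflTransGen.single hvw).tail hwu⟩
  exact hT.1 u (hvu ▸ huv)

theorem IsBetween.symm (h : IsBetween E v w u) : IsBetween E w v u := Or.symm h

theorem IsBetween.trans (hx : IsBetween E v w x) (hu : IsBetween E v x u) :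
    IsBetween E v w u := by
  rcases hx with ⟨hvx, hxw⟩ | ⟨hwx, hxv⟩ <;> rcases hu with ⟨hvu, hux⟩ | ⟨hxu, huv⟩
  · exact .inl ⟨hvu, hux.trans hxw⟩
  · exact .inl ⟨hvx.trans hxu, huv.trans (hvx.trans hxw)⟩
  · exact .inr ⟨hwx.trans (hxv.trans hvu), hux.trans hxv⟩
  · exact .inr ⟨hwx.trans hxu, huv⟩

theorem IsBetween.antisymmRel (h : AntisymmRel (ReflTransGen E) v w) (hx : IsBetween E v w x) :
    AntisymmRel (ReflTransGen E) v x := by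
  rcases hx with ⟨hvx, hxw⟩ | ⟨hwx, hxv⟩
  · exact ⟨hvx, hxw.trans h.2⟩
  · exact ⟨h.1.trans hwx, hxv⟩

theorem isBetween_left (hT : IsTournament E) (v w : V) : IsBetween E v w v :=
  (hT.reach_total v w).imp (⟨.refl, ·⟩) (⟨·, .refl⟩)

theorem isBetween_right (hT : IsTournament E) (v w : V) : IsBetween E v w w :=
  (isBetween_left hT w v).symm

namespace SameComponent

theorem refl (v : V) : SameComponent E v v := .inl (AntisymmRel.refl _ v)

theorem symm (h : SameComponent E v w) : SameComponent E w v :=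
  h.imp AntisymmRel.symm fun h u hu => h u hu.symm

theorem antisymmRel (hT : IsTournament E) (hv : ¬ IsTrivialSCC E v)
    (h : SameComponent E v w) : AntisymmRel (ReflTransGen E) v w :=
  h.resolve_right fun h' => hv (h' v (isBetween_left hT v w))

theorem of_isBetween (h : SameComponent E v w) (hx : IsBetween E v w x) :
    SameComponent E v x :=
  h.imp (IsBetween.antisymmRel · hx) fun h u hu => h u (hx.trans hu)

theorem trans (hT : IsTournament E) (h : SameComponent E u v) (h' : SameComponent E v w) :
    SameComponent E u w := by
  by_cases hv : IsTrivialSCC E v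
  · rcases h with h | h
    · rwa [hv u h.symm]
    rcases h' with h' | h'
    · exact hv w h' ▸ .inr h
    refine .inr fun x hx => ?_
    rcases hx with ⟨hux, hxw⟩ | ⟨hwx, hxu⟩ <;> rcases hT.reach_total x v with hxv | hvx
    · exact h x (.inl ⟨hux, hxv⟩)
    · exact h' x (.inl ⟨hvx, hxw⟩)
    · exact h' x (.inr ⟨hwx, hxv⟩)
    · exact h x (.inr ⟨hvx, hxu⟩)
  · exact .inl ((h.symm.antisymmRel hT hv).symm.trans (h'.antisymmRel hT hv))

theorem reach_of_left (hT : IsTournament E) {v v' w : V} (hv : SameComponent E v v')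
    (h : ReflTransGen E v w) (hn : ¬ SameComponent E v w) : ReflTransGen E v' w :=
  (hT.reach_total v' w).resolve_right fun hwv' => hn (hv.of_isBetween (.inl ⟨h, hwv'⟩))

theorem reach_of_right (hT : IsTournament E) {v w w' : V} (hw : SameComponent E w w')
    (h : ReflTransGen E v w) (hn : ¬ SameComponent E v w) : ReflTransGen E v w' :=
  (hT.reach_total v w').resolve_right fun hw'v => hn (hw.of_isBetween (.inr ⟨hw'v, h⟩)).symm

end SameComponent

variable (E) in
def ComponentLT (v w : V) : Prop :=
  ReflTransGen E v w ∧ ¬ SameComponent E v w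

namespace ComponentLT

theorem congr (hT : IsTournament E) {v v' w w' : V} (hv : SameComponent E v v')
    (hw : SameComponent E w w') (h : ComponentLT E v w) : ComponentLT E v' w' := by
  obtain ⟨hvw, hn⟩ := h
  have hn' : ¬ SameComponent E v' w := fun h' => hn (hv.trans hT h')
  exact ⟨hw.reach_of_right hT (hv.reach_of_left hT hvw hn) hn',
    fun h' => hn' (h'.trans hT hw.symm)⟩

theorem trans (h : ComponentLT E u v) (h' : ComponentLT E v w) : ComponentLT E u w :=
  ⟨h.1.trans h'.1, fun huw => h.2 (huw.of_isBetween (.inl ⟨h.1, h'.1⟩))⟩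

theorem sameComponent_of_not (hT : IsTournament E) (h : ¬ ComponentLT E v w)
    (h' : ¬ ComponentLT E w v) : SameComponent E v w := by
  by_contra hn
  rcases hT.reach_total v w with hvw | hwv
  · exact h ⟨hvw, hn⟩
  · exact h' ⟨hwv, fun h'' => hn h''.symm⟩

end ComponentLT

variable (hT : IsTournament E)

def componentSetoid : Setoid V :=
  ⟨SameComponent E, ⟨.refl, .symm, .trans hT⟩⟩

def Component : Type _ :=
  Quotient (componentSetoid hT)

namespace Component

def mk (v : V) : Component hT :=
  Quotient.mk _ v

theorem mk_eq_mk : mk hT v = mk hT w ↔ SameComponent E v w :=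
  Quotient.eq

theorem mk_surjective : Surjective (mk hT) :=
  Quotient.mk_surjective

instance [Countable V] : Countable (Component hT) :=
  inferInstanceAs (Countable (Quotient _))

def Lt : Component hT → Component hT → Prop :=
  Quotient.lift₂ (ComponentLT E) fun _ _ _ _ hv hw =>
    propext ⟨.congr hT hv hw, .congr hT hv.symm hw.symm⟩

instance : IsStrictTotalOrder (Component hT) (Lt hT) where
  irrefl := by
    rintro ⟨v⟩ ⟨-, hn⟩
    exact hn (.refl v)
  trans := by
    rintro ⟨u⟩ ⟨v⟩ ⟨w⟩
    exact ComponentLT.trans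
  trichotomous := by
    rintro ⟨v⟩ ⟨w⟩ h h'
    exact Quot.sound (ComponentLT.sameComponent_of_not hT h h')

noncomputable instance : LinearOrder (Component hT) := by
  classical exact linearOrderOfSTO (Lt hT)

def irreducibleSet : Set (Component hT) :=
  {c | ∃ v, mk hT v = c ∧ ¬ IsTrivialSCC E v}

def singletonSet : Set (Component hT) :=
  {c | ∃! v, mk hT v = c}

def transitiveSet : Set (Component hT) :=
  (irreducibleSet hT ∪ singletonSet hT)ᶜ

variable {hT}

theorem mk_lt_mk : mk hT v < mk hT w ↔ ComponentLT E v w :=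
  Iff.rfl

theorem antisymmRel_of_mk_eq (hu : ¬ IsTrivialSCC E u) (h : mk hT v = mk hT u) :
    AntisymmRel (ReflTransGen E) u v :=
  ((mk_eq_mk hT).1 h).symm.antisymmRel hT hu

theorem mk_mem_irreducibleSet : mk hT v ∈ irreducibleSet hT ↔ ¬ IsTrivialSCC E v := by
  refine ⟨fun ⟨u, hu, hnt⟩ htriv => hnt ?_, fun h => ⟨v, rfl, h⟩⟩
  rwa [htriv u (antisymmRel_of_mk_eq hnt hu.symm).symm]

theorem irreducibleSet_inter_singletonSet : irreducibleSet hT ∩ singletonSet hT = ∅ := by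
  refine Set.eq_empty_iff_forall_notMem.2 ?_
  rintro _ ⟨⟨v, rfl, hv⟩, w, -, huniq⟩
  obtain ⟨u, hvu, hne⟩ := not_isTrivialSCC_iff.1 hv
  exact hne ((huniq u ((mk_eq_mk hT).2 (.inl hvu.symm))).trans (huniq v rfl).symm)

theorem tourIrreducible_fiber {c : Component hT} (hc : c ∈ irreducibleSet hT) :
    TourIrreducible (fun v w : {x : V // mk hT x = c} => E v.1 w.1) := by
  obtain ⟨u, rfl, hu⟩ := hc
  have hfiber : ∀ x, mk hT x = mk hT u ↔ AntisymmRel (ReflTransGen E) u x := fun x =>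
    ⟨antisymmRel_of_mk_eq hu, fun h => (mk_eq_mk hT).2 (.inl h.symm)⟩
  refine (hT.comap Subtype.val_injective).tourIrreducible_iff.2 fun ⟨a, ha⟩ ⟨b, hb⟩ => ?_
  rw [hfiber] at ha hb
  refine ReflTransGen.restrict (fun x hax hxb => ?_) (ha.2.trans hb.1)
  exact (hfiber x).2 ⟨ha.1.trans hax, hxb.trans hb.2⟩

theorem edge_of_mk_lt (h : mk hT v < mk hT w) : E v w := by
  obtain ⟨hvw, hn⟩ := mk_lt_mk.1 h
  have hne : v ≠ w := by
    rintro rfl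
    exact hn (.refl v)
  exact (hT.edge_or_edge hne).resolve_right fun hwv => hn (.inl ⟨hvw, .single hwv⟩)

theorem exists_mem_irreducibleSet_between {i j : Component hT} (hi : i ∉ irreducibleSet hT)
    (hj : j ∉ irreducibleSet hT) (hij : i < j) : ∃ k ∈ irreducibleSet hT, i < k ∧ k < j := by
  obtain ⟨v, rfl⟩ := mk_surjective hT i
  obtain ⟨w, rfl⟩ := mk_surjective hT j
  obtain ⟨hvw, hn⟩ := mk_lt_mk.1 hij
  obtain ⟨u, hu, hnt⟩ : ∃ u, IsBetween E v w u ∧ ¬ IsTrivialSCC E u := by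
    by_contra! h
    exact hn (.inr h)
  have hvu : ReflTransGen E v u ∧ ReflTransGen E u w :=
    hu.resolve_right fun h => hn (.inl ⟨hvw, h.1.trans h.2⟩)
  refine ⟨mk hT u, mk_mem_irreducibleSet.2 hnt, mk_lt_mk.2 ⟨hvu.1, fun h => hi ?_⟩,
    mk_lt_mk.2 ⟨hvu.2, fun h => hj ?_⟩⟩
  · rw [(mk_eq_mk hT).2 h]
    exact mk_mem_irreducibleSet.2 hnt
  · rw [← (mk_eq_mk hT).2 h]
    exact mk_mem_irreducibleSet.2 hnt

theorem isRefinedDecomp :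
    IsRefinedDecomp E (mk hT) (irreducibleSet hT) (transitiveSet hT) (singletonSet hT) := by
  have hQ1I := irreducibleSet_inter_singletonSet (hT := hT)
  have hnotQ1 : ∀ i ∈ transitiveSet hT ∪ singletonSet hT, i ∉ irreducibleSet hT := by
    rintro i (hi | hi) hi1
    · exact hi (.inl hi1)
    · exact Set.eq_empty_iff_forall_notMem.1 hQ1I i ⟨hi1, hi⟩
  refine ⟨mk_surjective hT, ?_, ?_, hQ1I, ?_, fun v w => edge_of_mk_lt,
    fun i hi => ⟨tourIrreducible_fiber hi, ?_⟩,
    fun i hi => ⟨fun u v w hu _ _ => IsTrivialSCC.edge_trans hT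
      (not_not.1 fun h => hnotQ1 i (.inl hi) (hu ▸ mk_mem_irreducibleSet.2 h)), ?_⟩,
    fun i hi => hi,
    fun i hi j hj => exists_mem_irreducibleSet_between (hnotQ1 i hi) (hnotQ1 j hj)⟩
  · ext i
    simp only [transitiveSet, Set.mem_union, Set.mem_compl_iff, Set.mem_univ, iff_true]
    tauto
  · exact Set.eq_empty_iff_forall_notMem.2 fun i ⟨h1, h2⟩ => h2 (.inl h1)
  · exact Set.eq_empty_iff_forall_notMem.2 fun i ⟨h2, hI⟩ => h2 (.inr hI)
  · obtain ⟨v, rfl, hv⟩ := hi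
    obtain ⟨u, hvu, hne⟩ := not_isTrivialSCC_iff.1 hv
    exact ⟨u, v, (mk_eq_mk hT).2 (.inl hvu.symm), rfl, hne⟩
  · obtain ⟨v, rfl⟩ := mk_surjective hT i
    by_contra! h
    exact hi (.inr ⟨v, rfl, fun w hw => h w v hw rfl⟩)

end Component

end Components

namespace IsRefinedDecomp

variable {V Q : Type*} [LinearOrder Q] {E : V → V → Prop} {part : V → Q} {Q1 Q2 I : Set Q}
  {u v w : V}

theorem edge_of_lt (hd : IsRefinedDecomp E part Q1 Q2 I) (h : part v < part w) : E v w :=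
  hd.2.2.2.2.2.1 v w h

theorem mem_Q2_iff (hd : IsRefinedDecomp E part Q1 Q2 I) {i : Q} :
    i ∈ Q2 ↔ i ∉ Q1 ∧ i ∉ I := by
  obtain ⟨-, hcover, h12, -, h2I, -⟩ := hd
  constructor
  · exact fun h => ⟨fun h1 => Set.eq_empty_iff_forall_notMem.1 h12 i ⟨h1, h⟩,
      fun hI => Set.eq_empty_iff_forall_notMem.1 h2I i ⟨h, hI⟩⟩
  · rintro ⟨h1, hI⟩
    rcases (hcover ▸ Set.mem_univ i : i ∈ Q1 ∪ Q2 ∪ I) with (h | h) | h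
    exacts [absurd h h1, h, absurd h hI]

theorem mem_Q2_union_I (hd : IsRefinedDecomp E part Q1 Q2 I) {i : Q} (hi : i ∉ Q1) :
    i ∈ Q2 ∪ I := by
  by_cases hI : i ∈ I
  · exact .inr hI
  · exact .inl (hd.mem_Q2_iff.2 ⟨hi, hI⟩)

theorem mem_I_iff (hd : IsRefinedDecomp E part Q1 Q2 I) {i : Q} :
    i ∈ I ↔ ∃! v, part v = i := by
  obtain ⟨-, hcover, -, -, -, -, hQ1, hQ2, hI, -⟩ := hd
  refine ⟨hI i, fun h => ?_⟩
  have hnot : ¬ ∃ v w, part v = i ∧ part w = i ∧ v ≠ w := fun ⟨_, _, hv, hw, hne⟩ =>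
    hne (h.unique hv hw)
  rcases (hcover ▸ Set.mem_univ i : i ∈ Q1 ∪ Q2 ∪ I) with (h1 | h2) | hi
  exacts [absurd (hQ1 i h1).2 hnot, absurd (hQ2 i h2).2 hnot, hi]

theorem le_of_reach (hT : IsTournament E) (hd : IsRefinedDecomp E part Q1 Q2 I)
    (h : ReflTransGen E v w) : part v ≤ part w := by
  induction h with
  | refl => exact le_rfl
  | tail _ hxy ih => exact ih.trans (not_lt.1 fun hlt => hT.asymm hxy (hd.edge_of_lt hlt))

theorem part_eq_of_isBetween (hT : IsTournament E) (hd : IsRefinedDecomp E part Q1 Q2 I)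
    (hu : IsBetween E v w u) (h : part v = part w) : part u = part v := by
  rcases hu with ⟨hvu, huw⟩ | ⟨hwu, huv⟩
  · exact le_antisymm ((hd.le_of_reach hT huw).trans h.ge) (hd.le_of_reach hT hvu)
  · exact le_antisymm (hd.le_of_reach hT huv) (h.le.trans (hd.le_of_reach hT hwu))

theorem antisymmRel_of_mem_Q1 (hT : IsTournament E) (hd : IsRefinedDecomp E part Q1 Q2 I)
    (hv : part v ∈ Q1) (hw : part w = part v) : AntisymmRel (ReflTransGen E) v w := by
  have hreach := (hT.comap Subtype.val_injective).tourIrreducible_iff.1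
    (hd.2.2.2.2.2.2.1 _ hv).1
  have hlift : ∀ a b : {x // part x = part v}, ReflTransGen E a.1 b.1 := fun a b =>
    ReflTransGen.lift Subtype.val (fun _ _ h => h) _ _ (hreach a b)
  exact ⟨hlift ⟨v, rfl⟩ ⟨w, hw⟩, hlift ⟨w, hw⟩ ⟨v, rfl⟩⟩

theorem isTrivialSCC_of_not_mem_Q1 (hT : IsTournament E) (hd : IsRefinedDecomp E part Q1 Q2 I)
    (hv : part v ∉ Q1) : IsTrivialSCC E v := by
  intro w hvw
  have hw : part w = part v := le_antisymm (hd.le_of_reach hT hvw.2) (hd.le_of_reach hT hvw.1)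
  rcases hd.mem_Q2_union_I hv with hQ2 | hI
  · let F := fun a b : {x // part x = part v} => E a.1 b.1
    have : IsTrans _ F := ⟨fun a b c => (hd.2.2.2.2.2.2.2.1 _ hQ2).1 a b c a.2 b.2 c.2⟩
    -- a transitive tournament has no cycle, so its reachability is its edge relation
    have hpath : ∀ a b : {x // part x = part v}, ReflTransGen E a.1 b.1 → b = a ∨ F a b := by
      intro a b h
      have hab := ReflTransGen.restrict (fun x hax hxb => (part_eq_of_isBetween hT hd
        (.inl ⟨hax, hxb⟩) (a.2.trans b.2.symm)).trans a.2) h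
      rwa [reflTransGen_iff_eq_or_transGen, transGen_eq_self] at hab
    by_contra hne
    have hne' : (⟨w, hw⟩ : {x // part x = part v}) ≠ ⟨v, rfl⟩ := fun h => hne (congrArg (·.1) h)
    exact hT.asymm ((hpath ⟨v, rfl⟩ ⟨w, hw⟩ hvw.1).resolve_left hne')
      ((hpath ⟨w, hw⟩ ⟨v, rfl⟩ hvw.2).resolve_left hne'.symm)
  · exact (hd.2.2.2.2.2.2.2.2.1 _ hI).unique hw rfl

theorem isTrivialSCC_iff (hT : IsTournament E) (hd : IsRefinedDecomp E part Q1 Q2 I) :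
    IsTrivialSCC E v ↔ part v ∉ Q1 := by
  refine ⟨fun htriv hv => ?_, hd.isTrivialSCC_of_not_mem_Q1 hT⟩
  obtain ⟨x, y, hx, hy, hne⟩ := (hd.2.2.2.2.2.2.1 _ hv).2
  exact hne ((htriv x (hd.antisymmRel_of_mem_Q1 hT hv hx)).trans
    (htriv y (hd.antisymmRel_of_mem_Q1 hT hv hy)).symm)

/-- The separation condition puts a nontrivial strong component between any two distinct
pieces made of trivial ones. -/
theorem not_lt_of_sameComponent (hT : IsTournament E) (hd : IsRefinedDecomp E part Q1 Q2 I)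
    (h : SameComponent E v w) : ¬ part v < part w := by
  intro hlt
  rcases h with hs | h
  · exact (hd.le_of_reach hT hs.2).not_gt hlt
  have hQ1 : ∀ u, IsBetween E v w u → part u ∉ Q1 := fun u hu =>
    (hd.isTrivialSCC_iff hT).1 (h u hu)
  obtain ⟨k, hk, hvk, hkw⟩ := hd.2.2.2.2.2.2.2.2.2 _
    (hd.mem_Q2_union_I (hQ1 v (isBetween_left hT v w))) _
    (hd.mem_Q2_union_I (hQ1 w (isBetween_right hT v w))) hlt
  obtain ⟨u, rfl⟩ := hd.1 k
  exact hQ1 u (.inl ⟨.single (hd.edge_of_lt hvk), .single (hd.edge_of_lt hkw)⟩) hk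

theorem part_eq_part_iff (hT : IsTournament E) (hd : IsRefinedDecomp E part Q1 Q2 I) :
    part v = part w ↔ SameComponent E v w := by
  refine ⟨fun h => ?_, fun h => le_antisymm (not_lt.1 (hd.not_lt_of_sameComponent hT h.symm))
    (not_lt.1 (hd.not_lt_of_sameComponent hT h))⟩
  by_cases hv : part v ∈ Q1
  · exact .inl (hd.antisymmRel_of_mem_Q1 hT hv h.symm)
  · exact .inr fun u hu =>
      (hd.isTrivialSCC_iff hT).2 ((hd.part_eq_of_isBetween hT hu h).symm ▸ hv)

theorem exists_orderIso {Q' : Type*} [LinearOrder Q'] {part' : V → Q'} {Q1' Q2' I' : Set Q'}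
    (hT : IsTournament E) (hd : IsRefinedDecomp E part Q1 Q2 I)
    (hd' : IsRefinedDecomp E part' Q1' Q2' I') :
    ∃ f : Q ≃o Q', (∀ v : V, part' v = f (part v)) ∧
      f '' Q1 = Q1' ∧ f '' Q2 = Q2' ∧ f '' I = I' := by
  have hfiber : ∀ v w, part v = part w ↔ part' v = part' w := fun v w =>
    (hd.part_eq_part_iff hT).trans (hd'.part_eq_part_iff hT).symm
  let f : Q → Q' := fun i => part' (surjInv hd.1 i)
  have hf : ∀ v, part' v = f (part v) := fun v =>
    (hfiber _ _).1 (surjInv_eq hd.1 _).symm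
  have hmono : StrictMono f := by
    intro i j hij
    obtain ⟨v, rfl⟩ := hd.1 i
    obtain ⟨w, rfl⟩ := hd.1 j
    rw [← hf, ← hf]
    exact (hd'.le_of_reach hT (.single (hd.edge_of_lt hij))).lt_of_ne
      fun h => hij.ne ((hfiber v w).2 h)
  have hsurj : Surjective f := fun y =>
    let ⟨v, hv⟩ := hd'.1 y
    ⟨part v, (hf v) ▸ hv⟩
  have himage : ∀ {S S'}, (∀ v, part v ∈ S ↔ part' v ∈ S') → f '' S = S' :=
    image_eq_of_forall_mem_iff hd.1 hd'.1 hf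
  have hQ1 : ∀ v, part v ∈ Q1 ↔ part' v ∈ Q1' := fun v => by
    rw [← not_iff_not, ← hd.isTrivialSCC_iff hT, ← hd'.isTrivialSCC_iff hT]
  have hI : ∀ v, part v ∈ I ↔ part' v ∈ I' := fun v => by
    simp only [hd.mem_I_iff, hd'.mem_I_iff, hfiber]
  refine ⟨StrictMono.orderIsoOfSurjective f hmono hsurj, hf, himage hQ1, himage fun v => ?_,
    himage hI⟩
  rw [hd.mem_Q2_iff, hd'.mem_Q2_iff, hQ1, hI]

end IsRefinedDecomp

/-- Every countable tournament decomposes as a direct sum of irreducible components with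
at least two vertices, transitive components with at least two vertices, and singletons,
with transitive/singleton components separated by irreducible ones; the decomposition is
unique up to order isomorphism of the index set. -/
theorem stmt3 {V : Type} [Countable V] (E : V → V → Prop) (hT : IsTournament E) :
    ∃ (Q : Type) (_ : LinearOrder Q) (part : V → Q) (Q1 Q2 I : Set Q),
      Countable Q ∧ IsRefinedDecomp E part Q1 Q2 I ∧
      (∀ (Q' : Type) (_ : LinearOrder Q') (part' : V → Q') (Q1' Q2' I' : Set Q'),
        IsRefinedDecomp E part' Q1' Q2' I' →
        ∃ f : Q ≃o Q', (∀ v : V, part' v = f (part v)) ∧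
          f '' Q1 = Q1' ∧ f '' Q2 = Q2' ∧ f '' I = I') :=
  ⟨Component hT, inferInstance, Component.mk hT, _, _, _, inferInstance,
    Component.isRefinedDecomp,
    fun _ _ _ _ _ _ hd => Component.isRefinedDecomp.exists_orderIso hT hd⟩
end

section
/- Let Q = {1, …, p} with its usual order, let G_1, …, G_p be finite tournaments, and set G = ⊕_{i∈Q} G_i. Then for every finite tournament F, t_ind(F, G) = (1 / (v(G))_{v(F)}) · ∑ over all ordered decompositions F = ⊕_{i∈Q} F_i (with parts F_i possibly empty) of ∏_{i∈Q} (v(G_i))_{v(F_i)} · t_ind(F_i, G_i). Equivalently, ind(F, G) = ∑ over all ordered decompositions F = ⊕_{i∈Q} F_i of ∏_{i∈Q} ind(F_i, G_i). -/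
open scoped Classical

/-- `ind(F, G)`: the number of injective maps preserving adjacency and non-adjacency. -/
noncomputable def indCount {A B : Type*} (EA : A → A → Prop) (EB : B → B → Prop) : ℕ :=
  Nat.card {φ : A → B // Function.Injective φ ∧
    (∀ a a' : A, EA a a' → EB (φ a) (φ a')) ∧
    (∀ a a' : A, ¬ EA a a' → ¬ EB (φ a) (φ a'))}

/-- The edge relation of the direct sum `⊕_{i ∈ Fin p} G_i`: edges within each summand,
and all cross edges directed from the smaller index to the larger. -/
def sigmaRel {p : ℕ} {V : Fin p → Type*} (E : ∀ i, V i → V i → Prop) :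
    (Σ i, V i) → (Σ i, V i) → Prop :=
  fun v w => v.1 < w.1 ∨ ∃ h : w.1 = v.1, E v.1 v.2 (h ▸ w.2)

/-- The type of embeddings counted by `indCount`. -/
def EmbT {A B : Type*} (EA : A → A → Prop) (EB : B → B → Prop) :=
  {φ : A → B // Function.Injective φ ∧
    (∀ a a' : A, EA a a' → EB (φ a) (φ a')) ∧
    (∀ a a' : A, ¬ EA a a' → ¬ EB (φ a) (φ a'))}

noncomputable instance {A B : Type*} [Fintype A] [Fintype B]
    (EA : A → A → Prop) (EB : B → B → Prop) : Fintype (EmbT EA EB) :=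
  Subtype.fintype _

lemma indCount_eq {A B : Type*} (EA : A → A → Prop) (EB : B → B → Prop) :
    indCount EA EB = Nat.card (EmbT EA EB) := rfl

lemma sigma_eta {ι : Type*} {W : ι → Type*} (s : Σ i, W i) {i : ι} (h : s.1 = i) :
    s = ⟨i, h ▸ s.2⟩ := by cases s; subst h; rfl

lemma sigmaRel_same {p : ℕ} {V : Fin p → Type*} (E : ∀ i, V i → V i → Prop)
    (i : Fin p) (a b : V i) : sigmaRel E ⟨i, a⟩ ⟨i, b⟩ ↔ E i a b := by
  constructor
  · rintro (h | ⟨h, he⟩)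
    · exact absurd h (lt_irrefl i)
    · exact he
  · intro h; exact Or.inr ⟨rfl, h⟩

section Main

variable {p : ℕ} {V : Fin p → Type} {E : ∀ i, V i → V i → Prop}
  {VF : Type} {EF : VF → VF → Prop}

/-- The type of ordered decompositions together with per-part embeddings. -/
def Decomp (V : Fin p → Type) (E : ∀ i, V i → V i → Prop) (EF : VF → VF → Prop) :=
  Σ c : {c : VF → Fin p // ∀ v w : VF, c v < c w → EF v w},
    ∀ i : Fin p, EmbT (fun v w : {x : VF // c.1 x = i} => EF v.1 w.1) (E i)

lemma key (φ : EmbT EF (sigmaRel E)) (v w : VF) :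
    EF v w ↔ sigmaRel E (φ.1 v) (φ.1 w) :=
  ⟨φ.2.2.1 v w, fun h => by by_contra hn; exact φ.2.2.2 v w hn h⟩

def fwd (φ : EmbT EF (sigmaRel E)) : Decomp V E EF := by
  refine ⟨⟨fun v => (φ.1 v).1, fun v w h => (key φ v w).2 (Or.inl h)⟩,
    fun i => ⟨fun x => x.2 ▸ (φ.1 x.1).2, ?_, ?_, ?_⟩⟩
  · intro x y hxy
    have hx := sigma_eta (φ.1 x.1) x.2
    have hy := sigma_eta (φ.1 y.1) y.2
    have : φ.1 x.1 = φ.1 y.1 := by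
      rw [hx, hy]; exact congrArg (fun z => (⟨i, z⟩ : Σ j, V j)) hxy
    exact Subtype.ext (φ.2.1 this)
  · intro x y hE
    have h := (key φ x.1 y.1).1 hE
    rw [sigma_eta (φ.1 x.1) x.2, sigma_eta (φ.1 y.1) y.2] at h
    exact (sigmaRel_same E i _ _).1 h
  · intro x y hnE hEi
    apply φ.2.2.2 x.1 y.1 hnE
    rw [sigma_eta (φ.1 x.1) x.2, sigma_eta (φ.1 y.1) y.2]
    exact (sigmaRel_same E i _ _).2 hEi

def bwdFun (c : VF → Fin p)
    (ψ : ∀ i : Fin p, EmbT (fun v w : {x : VF // c x = i} => EF v.1 w.1) (E i)) :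
    VF → Σ i, V i :=
  fun v => ⟨c v, (ψ (c v)).1 ⟨v, rfl⟩⟩

lemma bwdFun_eq (c : VF → Fin p)
    (ψ : ∀ i : Fin p, EmbT (fun v w : {x : VF // c x = i} => EF v.1 w.1) (E i))
    (v : VF) {i : Fin p} (h : c v = i) :
    bwdFun c ψ v = ⟨i, (ψ i).1 ⟨v, h⟩⟩ := by subst h; rfl

def bwd (hF : IsTournament EF) (s : Decomp V E EF) : EmbT EF (sigmaRel E) := by
  obtain ⟨⟨c, hc⟩, ψ⟩ := s
  refine ⟨bwdFun c ψ, ?_, ?_, ?_⟩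
  · intro v w h
    have h1 : c v = c w := congrArg Sigma.fst h
    rw [bwdFun_eq c ψ v rfl, bwdFun_eq c ψ w h1.symm] at h
    have h2 : (ψ (c v)).1 ⟨v, rfl⟩ = (ψ (c v)).1 ⟨w, h1.symm⟩ := by
      simpa using h
    have h3 := (ψ (c v)).2.1 h2
    exact congrArg Subtype.val h3
  · intro v w hE
    rcases lt_trichotomy (c v) (c w) with hlt | heq | hgt
    · exact Or.inl hlt
    · rw [bwdFun_eq c ψ v rfl, bwdFun_eq c ψ w heq.symm]
      exact (sigmaRel_same E (c v) _ _).2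
        ((ψ (c v)).2.2.1 ⟨v, rfl⟩ ⟨w, heq.symm⟩ hE)
    · exfalso
      have hwv : EF w v := hc w v hgt
      have hne : v ≠ w := by rintro rfl; exact hF.1 v hE
      exact (hF.2 v w hne).1 hE hwv
  · intro v w hnE hrel
    have hrel2 := hrel
    rcases hrel with hlt | ⟨h, _⟩
    · exact hnE (hc v w hlt)
    · have h' : c w = c v := h
      rw [bwdFun_eq c ψ v rfl, bwdFun_eq c ψ w h'] at hrel2
      exact (ψ (c v)).2.2.2 ⟨v, rfl⟩ ⟨w, h'⟩ hnE
        ((sigmaRel_same E (c v) _ _).1 hrel2)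

def mainEquiv (hF : IsTournament EF) : EmbT EF (sigmaRel E) ≃ Decomp V E EF where
  toFun := fwd
  invFun := bwd hF
  left_inv φ := by
    apply Subtype.ext
    funext v
    rfl
  right_inv s := by
    obtain ⟨⟨c, hc⟩, ψ⟩ := s
    refine Sigma.ext rfl (heq_of_eq ?_)
    funext i
    apply Subtype.ext
    funext x
    obtain ⟨v, hv⟩ := x
    subst hv
    rfl

end Main

/-- Counting formula for induced homomorphism numbers of a finite direct sum of finite
tournaments: `ind(F, ⊕ G_i)` is the sum over all ordered decompositions of `F` (encoded
by colourings `c : V(F) → Fin p` compatible with the edges of `F`) of the products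
`∏ ind(F_i, G_i)`. -/
theorem stmt4 {p : ℕ} (V : Fin p → Type) [∀ i, Fintype (V i)]
    (E : ∀ i, V i → V i → Prop) (hG : ∀ i, IsTournament (E i))
    {VF : Type} [Fintype VF] (EF : VF → VF → Prop) (hF : IsTournament EF) :
    indCount EF (sigmaRel E) =
      ∑ c : VF → Fin p,
        (if ∀ v w : VF, c v < c w → EF v w then
          ∏ i : Fin p, indCount (fun v w : {x : VF // c x = i} => EF v.1 w.1) (E i)
        else 0) := by
  rw [indCount_eq, Nat.card_congr (mainEquiv (V := V) (E := E) hF)]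
  unfold Decomp
  rw [Nat.card_eq_fintype_card, Fintype.card_sigma]
  have h1 : ∀ c : {c : VF → Fin p // ∀ v w : VF, c v < c w → EF v w},
      Fintype.card (∀ i : Fin p,
        EmbT (fun v w : {x : VF // c.1 x = i} => EF v.1 w.1) (E i)) =
      ∏ i : Fin p, indCount (fun v w : {x : VF // c.1 x = i} => EF v.1 w.1) (E i) := by
    intro c
    rw [Fintype.card_pi]
    exact Finset.prod_congr rfl fun i _ => by
      rw [indCount_eq, Nat.card_eq_fintype_card]
  simp_rw [h1]
  rw [← Finset.sum_filter]
  exact (Finset.sum_subtype (p := fun c : VF → Fin p => ∀ v w : VF, c v < c w → EF v w)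
    (Finset.filter (fun c => ∀ v w : VF, c v < c w → EF v w) Finset.univ)
    (fun x => by simp)
    (fun c => ∏ i : Fin p,
      indCount (fun v w : {x : VF // c x = i} => EF v.1 w.1) (E i))).symm
end

section
/- Let W be a tournament kernel on a probability space (S, μ). Then the following are equivalent: (1) W is irreducible; (2) W is strongly connected, i.e. for μ-a.e. x ∈ S the set A(x) = ⋃_{m≥1} N^m({x}) satisfies μ(A(x)) = 1; (3) there does not exist a measurable set B ⊆ S with 0 < μ(B) < 1 such that μ(N(B) ∖ B) = 0; (4) there does not exist a measurable set B ⊆ S with 0 < μ(B) < 1 such that ∫_{B×S} W(x,y) dμ(x)dμ(y) = μ(B)²/2. -/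
/-!
Everything reduces to whether the set of positive-weight pairs from `B` to `Bᶜ` is null. By
Fubini this happens exactly when `N(B) ∖ B` is null; as `W ≥ 0`, it also happens exactly when
`∫_{B × Bᶜ} W = 0`, and as `W(x,y) + W(y,x) = 1` forces `∫_{B × B} W = μ(B)²/2`, the latter
is (4) for `B`. The same identity shows that `W = 1` a.e. on `B × Bᶜ` says that the
positive-weight pairs from `Bᶜ` to `B` are null, which turns (1) for `B` into (3) for `Bᶜ`.

If `N(B) ∖ B` is null then `N(B)` is closed under `N`, almost every `x ∈ B` has `N({x}) ⊆ N(B)`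
up to a null set, and hence `A(x)` lies in `N(B)` up to a null set, of measure at most `μ(B)`.
Conversely `A(x)` is always closed under `N`, and it has positive measure for a.e. `x`: two
points with null out-neighbourhoods carry no weight between them in either direction, so such
points form a null set.
-/

open MeasureTheory

/-- A tournament kernel on a probability space `(S, μ)`. -/
def IsTournamentKernel {S : Type*} [MeasurableSpace S] (μ : Measure S)
    (W : S → S → ℝ) : Prop :=
  Measurable (Function.uncurry W) ∧ (∀ x y : S, 0 ≤ W x y ∧ W x y ≤ 1) ∧
  (∀ᵐ p ∂(μ.prod μ), W p.1 p.2 + W p.2 p.1 = 1)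

/-- The out-neighbourhood of a set: `N(B) = {y : ∫_B W(x,y) dμ(x) > 0}`. -/
def kernelN {S : Type*} [MeasurableSpace S] (μ : Measure S) (W : S → S → ℝ)
    (B : Set S) : Set S :=
  {y : S | 0 < ∫ x in B, W x y ∂μ}

/-- The out-neighbourhood of a point: `N({x}) = {y : W(x,y) > 0}`. -/
def kernelNpt {S : Type*} (W : S → S → ℝ) (x : S) : Set S := {y : S | 0 < W x y}

open Set Filter

def kernelEdges {S : Type*} (W : S → S → ℝ) (B C : Set S) : Set (S × S) :=
  B ×ˢ C ∩ {p | 0 < W p.1 p.2}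

namespace IsTournamentKernel

variable {S : Type*} [MeasurableSpace S] {μ : Measure S} {W : S → S → ℝ}

lemma nonneg (hW : IsTournamentKernel μ W) (x y : S) : 0 ≤ W x y := (hW.2.1 x y).1

lemma le_one (hW : IsTournamentKernel μ W) (x y : S) : W x y ≤ 1 := (hW.2.1 x y).2

lemma apply_pos_iff_ne_zero (hW : IsTournamentKernel μ W) (x y : S) : 0 < W x y ↔ W x y ≠ 0 :=
  (hW.nonneg x y).lt_iff_ne'

lemma measurableSet_pos (hW : IsTournamentKernel μ W) :
    MeasurableSet {p : S × S | 0 < W p.1 p.2} :=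
  measurableSet_lt measurable_const hW.1

lemma measurableSet_kernelNpt (hW : IsTournamentKernel μ W) (x : S) :
    MeasurableSet (kernelNpt W x) :=
  measurableSet_lt measurable_const (hW.1.comp measurable_prodMk_left)

lemma norm_le_one (hW : IsTournamentKernel μ W) (x y : S) : ‖W x y‖ ≤ 1 := by
  rw [Real.norm_eq_abs, abs_of_nonneg (hW.nonneg x y)]
  exact hW.le_one x y

lemma integrable_prod [IsFiniteMeasure μ] (hW : IsTournamentKernel μ W) :
    Integrable (fun p : S × S => W p.1 p.2) (μ.prod μ) :=
  (integrable_const 1).mono' hW.1.aestronglyMeasurable <| .of_forall fun _ => hW.norm_le_one _ _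

lemma integrable_left [IsFiniteMeasure μ] (hW : IsTournamentKernel μ W) (y : S) :
    Integrable (fun x => W x y) μ :=
  (integrable_const 1).mono' (hW.1.comp measurable_prodMk_right).aestronglyMeasurable <|
    .of_forall fun x => hW.norm_le_one x y

lemma measurableSet_kernelN [SFinite μ] (hW : IsTournamentKernel μ W) (B : Set S) :
    MeasurableSet (kernelN μ W B) :=
  measurableSet_lt measurable_const
    (hW.1.stronglyMeasurable.integral_prod_left (μ := μ.restrict B)).measurable

lemma notMem_kernelN_iff_ae [IsFiniteMeasure μ] (hW : IsTournamentKernel μ W) {B : Set S}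
    {y : S} : y ∉ kernelN μ W B ↔ ∀ᵐ x ∂μ.restrict B, W x y = 0 := by
  rw [kernelN, mem_ofPred_eq, not_lt, (integral_nonneg fun x => hW.nonneg x y).ge_iff_eq, eq_comm]
  exact setIntegral_eq_zero_iff_of_nonneg_ae (.of_forall fun x => hW.nonneg x y)
    (hW.integrable_left y).integrableOn

lemma notMem_kernelN_iff [IsFiniteMeasure μ] (hW : IsTournamentKernel μ W) {B : Set S}
    (hB : MeasurableSet B) {y : S} : y ∉ kernelN μ W B ↔ μ (B ∩ {x | 0 < W x y}) = 0 := by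
  rw [hW.notMem_kernelN_iff_ae, ae_iff, Measure.restrict_apply' hB, inter_comm]
  simp only [hW.apply_pos_iff_ne_zero]

lemma kernelN_mono_ae [IsFiniteMeasure μ] (hW : IsTournamentKernel μ W) {A B : Set S}
    (h : A ≤ᵐ[μ] B) : kernelN μ W A ⊆ kernelN μ W B := fun y hy => by
  by_contra hyB
  exact (hW.notMem_kernelN_iff_ae.2 <| ae_mono (Measure.restrict_mono_ae h)
    (hW.notMem_kernelN_iff_ae.1 hyB)) hy

lemma kernelN_iUnion_subset [IsFiniteMeasure μ] (hW : IsTournamentKernel μ W) {ι : Type*}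
    [Countable ι] (A : ι → Set S) : kernelN μ W (⋃ i, A i) ⊆ ⋃ i, kernelN μ W (A i) := by
  intro y hy
  by_contra hmem
  simp only [mem_iUnion, not_exists] at hmem
  exact hW.notMem_kernelN_iff_ae.2 ((ae_restrict_iUnion_iff A _).2 fun i =>
    hW.notMem_kernelN_iff_ae.1 (hmem i)) hy

lemma measurableSet_kernelEdges (hW : IsTournamentKernel μ W) {B C : Set S}
    (hB : MeasurableSet B) (hC : MeasurableSet C) : MeasurableSet (kernelEdges W B C) :=
  (hB.prod hC).inter hW.measurableSet_pos

lemma measure_kernelEdges_eq_zero_iff [IsFiniteMeasure μ] (hW : IsTournamentKernel μ W)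
    {B C : Set S} (hB : MeasurableSet B) (hC : MeasurableSet C) :
    μ.prod μ (kernelEdges W B C) = 0 ↔ μ (kernelN μ W B ∩ C) = 0 := by
  have hE := hW.measurableSet_kernelEdges hB hC
  rw [Measure.prod_apply_symm hE, lintegral_eq_zero_iff (measurable_measure_prodMk_right hE),
    measure_eq_zero_iff_ae_notMem]
  refine eventually_congr (.of_forall fun y => ?_)
  by_cases hy : y ∈ C
  · have hsec : (fun x => (x, y)) ⁻¹' kernelEdges W B C = B ∩ {x | 0 < W x y} := by
      ext x; simp [kernelEdges, hy]
    simp [hsec, hy, hW.notMem_kernelN_iff hB]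
  · have hsec : (fun x => (x, y)) ⁻¹' kernelEdges W B C = ∅ := by
      ext x; simp [kernelEdges, hy]
    simp [hsec, hy]

lemma measure_kernelN_diff_eq_zero_iff [IsFiniteMeasure μ] (hW : IsTournamentKernel μ W)
    {B : Set S} (hB : MeasurableSet B) :
    μ (kernelN μ W B \ B) = 0 ↔ μ.prod μ (kernelEdges W B Bᶜ) = 0 := by
  rw [hW.measure_kernelEdges_eq_zero_iff hB hB.compl, sdiff_eq]

lemma ae_eq_one_on_prod_compl_iff [IsFiniteMeasure μ] (hW : IsTournamentKernel μ W)
    {B : Set S} (hB : MeasurableSet B) :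
    (∀ᵐ p ∂μ.prod μ, p.1 ∈ B → p.2 ∈ Bᶜ → W p.1 p.2 = 1) ↔
      μ (kernelN μ W Bᶜ \ Bᶜ) = 0 := by
  rw [hW.measure_kernelN_diff_eq_zero_iff hB.compl, compl_compl,
    ← Measure.measurePreserving_swap.measure_preimage
      (hW.measurableSet_kernelEdges hB.compl hB).nullMeasurableSet,
    measure_eq_zero_iff_ae_notMem]
  refine eventually_congr (hW.2.2.mono fun p hp => ?_)
  simp only [kernelEdges, mem_preimage, Prod.fst_swap, Prod.snd_swap, mem_inter_iff, mem_prod,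
    mem_compl_iff, mem_ofPred_eq, not_and, not_lt]
  have h0 := hW.nonneg p.2 p.1
  have h1 := hW.nonneg p.1 p.2
  constructor
  · rintro h ⟨hp2, hp1⟩; linarith [h hp1 hp2]
  · intro h hp1 hp2; linarith [h ⟨hp2, hp1⟩]

lemma setIntegral_prod_eq_zero_iff [IsFiniteMeasure μ] (hW : IsTournamentKernel μ W)
    (B C : Set S) :
    ∫ p in B ×ˢ C, W p.1 p.2 ∂μ.prod μ = 0 ↔ μ.prod μ (kernelEdges W B C) = 0 := by
  rw [setIntegral_eq_zero_iff_of_nonneg_ae (f := fun p : S × S => W p.1 p.2)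
    (.of_forall fun p => hW.nonneg p.1 p.2) hW.integrable_prod.integrableOn, EventuallyEq, ae_iff]
  simp only [Pi.zero_apply, ← hW.apply_pos_iff_ne_zero]
  rw [Measure.restrict_apply hW.measurableSet_pos, kernelEdges, inter_comm]

lemma setIntegral_prod_self [IsFiniteMeasure μ] (hW : IsTournamentKernel μ W) (B : Set S) :
    ∫ p in B ×ˢ B, W p.1 p.2 ∂μ.prod μ = (μ B).toReal ^ 2 / 2 := by
  have hswap : ∫ p in B ×ˢ B, W p.2 p.1 ∂μ.prod μ = ∫ p in B ×ˢ B, W p.1 p.2 ∂μ.prod μ := by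
    simpa [preimage_swap_prod] using Measure.measurePreserving_swap.setIntegral_preimage_emb
      MeasurableEquiv.prodComm.measurableEmbedding (fun p : S × S => W p.1 p.2) (B ×ˢ B)
  have hsum : ∫ p in B ×ˢ B, (W p.1 p.2 + W p.2 p.1) ∂μ.prod μ = (μ B).toReal ^ 2 := by
    rw [integral_congr_ae (g := fun _ => 1) (ae_restrict_of_ae hW.2.2), integral_const,
      smul_eq_mul, mul_one, measureReal_restrict_apply_univ, measureReal_def, Measure.prod_prod,
      ENNReal.toReal_mul, sq]
  rw [integral_add (f := fun p : S × S => W p.1 p.2) (g := fun p : S × S => W p.2 p.1)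
    hW.integrable_prod.integrableOn hW.integrable_prod.swap.integrableOn, hswap] at hsum
  linarith

lemma setIntegral_integral_eq [IsFiniteMeasure μ] (hW : IsTournamentKernel μ W) {B : Set S}
    (hB : MeasurableSet B) :
    ∫ x in B, ∫ y, W x y ∂μ ∂μ =
      (μ B).toReal ^ 2 / 2 + ∫ p in B ×ˢ Bᶜ, W p.1 p.2 ∂μ.prod μ := by
  rw [← hW.setIntegral_prod_self B, ← setIntegral_union (disjoint_compl_right.set_prod_right B B)
    (hB.prod hB.compl) hW.integrable_prod.integrableOn hW.integrable_prod.integrableOn,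
    ← prod_union, union_compl_self, setIntegral_prod _ hW.integrable_prod.integrableOn]
  simp

lemma setIntegral_integral_eq_sq_div_two_iff [IsFiniteMeasure μ] (hW : IsTournamentKernel μ W)
    {B : Set S} (hB : MeasurableSet B) :
    ∫ x in B, ∫ y, W x y ∂μ ∂μ = (μ B).toReal ^ 2 / 2 ↔ μ (kernelN μ W B \ B) = 0 := by
  rw [hW.setIntegral_integral_eq hB, add_eq_left, hW.setIntegral_prod_eq_zero_iff,
    hW.measure_kernelN_diff_eq_zero_iff hB]

lemma ae_measure_kernelNpt_pos [SFinite μ] (hW : IsTournamentKernel μ W) :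
    ∀ᵐ x ∂μ, 0 < μ (kernelNpt W x) := by
  set Z := {x | μ (kernelNpt W x) = 0}
  have hZ : MeasurableSet Z :=
    measurable_measure_prodMk_left hW.measurableSet_pos (measurableSet_singleton 0)
  have hE : μ.prod μ (kernelEdges W Z univ) = 0 := by
    refine (Measure.measure_prod_null (hW.measurableSet_kernelEdges hZ .univ)).2
      (.of_forall fun x => ?_)
    by_cases hx : x ∈ Z
    · exact measure_mono_null (fun y hy => hy.2) hx
    · simp [kernelEdges, hx]
  -- Almost no pair of points of `Z` carries weight in either direction.
  have hZZ : μ.prod μ (Z ×ˢ Z) = 0 := by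
    rw [measure_eq_zero_iff_ae_notMem]
    filter_upwards [measure_eq_zero_iff_ae_notMem.1 hE,
      Measure.measurePreserving_swap.quasiMeasurePreserving.ae
        (measure_eq_zero_iff_ae_notMem.1 hE), hW.2.2] with p h12 h21 hsum ⟨h1, h2⟩
    have w12 := not_lt.1 fun h : 0 < W p.1 p.2 => h12 ⟨⟨h1, trivial⟩, h⟩
    have w21 := not_lt.1 fun h : 0 < W p.2 p.1 => h21 ⟨⟨h2, trivial⟩, h⟩
    linarith
  rw [Measure.prod_prod, mul_self_eq_zero] at hZZ
  exact (measure_eq_zero_iff_ae_notMem.1 hZZ).mono fun x hx => pos_iff_ne_zero.2 hx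

lemma measurableSet_iUnion_iterate_kernelN [SFinite μ] (hW : IsTournamentKernel μ W)
    {A : Set S} (hA : MeasurableSet A) : MeasurableSet (⋃ m, (kernelN μ W)^[m] A) := by
  refine .iUnion fun m => ?_
  cases m with
  | zero => exact hA
  | succ m => rw [Function.iterate_succ_apply']; exact hW.measurableSet_kernelN _

lemma kernelN_iUnion_iterate_subset [IsFiniteMeasure μ] (hW : IsTournamentKernel μ W)
    (A : Set S) : kernelN μ W (⋃ m, (kernelN μ W)^[m] A) ⊆ ⋃ m, (kernelN μ W)^[m] A :=
  (hW.kernelN_iUnion_subset _).trans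
    (iUnion_mono' fun m => ⟨m + 1, (Function.iterate_succ_apply' _ _ _).ge⟩)

lemma iUnion_iterate_kernelN_ae_le [IsFiniteMeasure μ] (hW : IsTournamentKernel μ W)
    {A C : Set S} (hC : kernelN μ W C ⊆ C) (hA : A ≤ᵐ[μ] C) :
    ⋃ m, (kernelN μ W)^[m] A ≤ᵐ[μ] C := by
  have h : ∀ m, (kernelN μ W)^[m] A ≤ᵐ[μ] C := by
    intro m
    induction m with
    | zero => exact hA
    | succ m ih =>
      rw [Function.iterate_succ_apply']
      exact ((hW.kernelN_mono_ae ih).trans hC).eventuallyLE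
  simpa only [iUnion_const] using Filter.EventuallyLE.countable_iUnion h

lemma ae_measure_iUnion_iterate_le [IsFiniteMeasure μ] (hW : IsTournamentKernel μ W)
    {B : Set S} (hB : MeasurableSet B) (hBc : μ (kernelN μ W B \ B) = 0) :
    ∀ᵐ x ∂μ, x ∈ B → μ (⋃ m, (kernelN μ W)^[m] (kernelNpt W x)) ≤ μ B := by
  have hNB : kernelN μ W B ≤ᵐ[μ] B := ae_le_set.2 hBc
  have hE : μ.prod μ (kernelEdges W B (kernelN μ W B)ᶜ) = 0 :=
    (hW.measure_kernelEdges_eq_zero_iff hB (hW.measurableSet_kernelN B).compl).2 (by simp)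
  filter_upwards [Measure.measure_ae_null_of_prod_null hE] with x hx hxB
  have hxN : kernelNpt W x ≤ᵐ[μ] kernelN μ W B :=
    ae_le_set.2 <| measure_mono_null (t := Prod.mk x ⁻¹' kernelEdges W B (kernelN μ W B)ᶜ)
      (fun y hy => ⟨⟨hxB, hy.2⟩, hy.1⟩) hx
  exact (measure_mono_ae (hW.iUnion_iterate_kernelN_ae_le (hW.kernelN_mono_ae hNB) hxN)).trans
    (measure_mono_ae hNB)

end IsTournamentKernel

lemma exists_measure_pos_lt_one_iff_of_compl {S : Type*} [MeasurableSpace S] {μ : Measure S}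
    [IsProbabilityMeasure μ] {P Q : Set S → Prop} (h : ∀ B, MeasurableSet B → (P B ↔ Q Bᶜ)) :
    (∃ B, MeasurableSet B ∧ 0 < μ B ∧ μ B < 1 ∧ P B) ↔
      ∃ B, MeasurableSet B ∧ 0 < μ B ∧ μ B < 1 ∧ Q B := by
  have compl_pos {B : Set S} (hB : MeasurableSet B) (h1 : μ B < 1) : 0 < μ Bᶜ := by
    rwa [prob_compl_eq_one_sub hB, tsub_pos_iff_lt]
  have compl_lt_one {B : Set S} (hB : MeasurableSet B) (h0 : 0 < μ B) : μ Bᶜ < 1 := by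
    simpa using prob_compl_lt_one_sub_of_lt_prob h0 hB
  constructor
  · rintro ⟨B, hB, h0, h1, hP⟩
    exact ⟨Bᶜ, hB.compl, compl_pos hB h1, compl_lt_one hB h0, (h B hB).1 hP⟩
  · rintro ⟨B, hB, h0, h1, hQ⟩
    exact ⟨Bᶜ, hB.compl, compl_pos hB h1, compl_lt_one hB h0,
      (h Bᶜ hB.compl).2 (by rwa [compl_compl])⟩

/-- Characterisation of irreducible tournament kernels. -/
theorem stmt11 {S : Type*} [MeasurableSpace S] (μ : Measure S) [IsProbabilityMeasure μ]
    (W : S → S → ℝ) (hW : IsTournamentKernel μ W) :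
    List.TFAE
      [ -- (1) irreducible
        (¬ ∃ B : Set S, MeasurableSet B ∧ 0 < μ B ∧ μ B < 1 ∧
          ∀ᵐ p ∂(μ.prod μ), p.1 ∈ B → p.2 ∈ Bᶜ → W p.1 p.2 = 1),
        -- (2) strongly connected: `A(x) = ⋃_{m ≥ 1} N^m({x})` has full measure a.e.
        (∀ᵐ x ∂μ, μ (⋃ m : ℕ, (kernelN μ W)^[m] (kernelNpt W x)) = 1),
        -- (3) no intermediate set essentially closed under out-neighbourhoods
        (¬ ∃ B : Set S, MeasurableSet B ∧ 0 < μ B ∧ μ B < 1 ∧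
          μ (kernelN μ W B \ B) = 0),
        -- (4) no set with `∫_{B × S} W = μ(B)² / 2`
        (¬ ∃ B : Set S, MeasurableSet B ∧ 0 < μ B ∧ μ B < 1 ∧
          (∫ x in B, ∫ y, W x y ∂μ ∂μ) = (μ B).toReal ^ 2 / 2) ] := by
  tfae_have 1 ↔ 3 := not_congr <|
    exists_measure_pos_lt_one_iff_of_compl fun _ hB => hW.ae_eq_one_on_prod_compl_iff hB
  tfae_have 3 ↔ 4 := not_congr <| exists_congr fun _ => and_congr_right fun hB =>
    Iff.rfl.and (Iff.rfl.and (hW.setIntegral_integral_eq_sq_div_two_iff hB).symm)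
  tfae_have 2 → 3 := by
    rintro h2 ⟨B, hB, h0, h1, hBc⟩
    refine h0.ne' (measure_eq_zero_iff_ae_notMem.2 ?_)
    filter_upwards [h2, hW.ae_measure_iUnion_iterate_le hB hBc] with x hx hxB hmem
    exact (hx ▸ hxB hmem).not_gt h1
  tfae_have 3 → 2 := by
    intro h3
    filter_upwards [hW.ae_measure_kernelNpt_pos] with x hx
    by_contra hne
    refine h3 ⟨_, hW.measurableSet_iUnion_iterate_kernelN (hW.measurableSet_kernelNpt x),
      hx.trans_le (measure_mono (subset_iUnion_of_subset 0 subset_rfl)),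
      prob_le_one.lt_of_ne hne, ?_⟩
    rw [sdiff_eq_empty.2 (hW.kernelN_iUnion_iterate_subset _), measure_empty]
  tfae_finish
end

section
/- Let W be a tournament kernel on a probability space (S, μ) and let Z be the associated collection of sets. Then Z is a semi-algebra that is closed under countable intersections: (a) ∅ ∈ Z and S ∈ Z; (b) if A_i ∈ Z for all i ≥ 1 then ⋂_{i≥1} A_i ∈ Z; (c) if A, B ∈ Z then B ∖ A is a finite union of pairwise disjoint elements of Z. -/
open MeasureTheory

/-- `A ≺ B`: `W = 1` almost everywhere on `A × B`. -/
def KPrec {S : Type*} [MeasurableSpace S] (μ : Measure S) (W : S → S → ℝ)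
    (A B : Set S) : Prop :=
  ∀ᵐ p ∂(μ.prod μ), p.1 ∈ A → p.2 ∈ B → W p.1 p.2 = 1

/-- The collection `Z`: measurable sets `A` admitting a partition `{B, C}` of the
complement of `A` with `B ≺ A`, `A ≺ C` and `B ≺ C`. -/
def memZ {S : Type*} [MeasurableSpace S] (μ : Measure S) (W : S → S → ℝ)
    (A : Set S) : Prop :=
  MeasurableSet A ∧ ∃ B C : Set S, MeasurableSet B ∧ MeasurableSet C ∧
    B ∪ C = Aᶜ ∧ B ∩ C = ∅ ∧ KPrec μ W B A ∧ KPrec μ W A C ∧ KPrec μ W B C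

section Aux

variable {S : Type*} [MeasurableSpace S] {μ : Measure S} {W : S → S → ℝ}

lemma kprec_empty_left (Y : Set S) : KPrec μ W ∅ Y :=
  Filter.Eventually.of_forall fun _ h => h.elim

lemma kprec_empty_right (X : Set S) : KPrec μ W X ∅ :=
  Filter.Eventually.of_forall fun _ _ h => h.elim

lemma kprec_union_left {X X' Y : Set S} (h : KPrec μ W X Y) (h' : KPrec μ W X' Y) :
    KPrec μ W (X ∪ X') Y := by
  filter_upwards [h, h'] with p hp hp' hx hy
  cases hx with
  | inl hx => exact hp hx hy
  | inr hx => exact hp' hx hy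

lemma kprec_union_right {X Y Y' : Set S} (h : KPrec μ W X Y) (h' : KPrec μ W X Y') :
    KPrec μ W X (Y ∪ Y') := by
  filter_upwards [h, h'] with p hp hp' hx hy
  cases hy with
  | inl hy => exact hp hx hy
  | inr hy => exact hp' hx hy

/-- Both pieces of a `Z`-witness are themselves in `Z`. -/
lemma memZ_pieces {A B C : Set S} (mA : MeasurableSet A) (mB : MeasurableSet B)
    (mC : MeasurableSet C) (hu : B ∪ C = Aᶜ) (hd : B ∩ C = ∅)
    (h1 : KPrec μ W B A) (h2 : KPrec μ W A C) (h3 : KPrec μ W B C) :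
    memZ μ W B ∧ memZ μ W C := by
  have hu' := Set.ext_iff.mp hu
  have hd' := Set.ext_iff.mp hd
  have hBc : Bᶜ = A ∪ C := by
    ext x
    have h1x := hu' x; have h2x := hd' x
    simp only [Set.mem_union, Set.mem_inter_iff, Set.mem_compl_iff, Set.mem_empty_iff_false]
      at h1x h2x ⊢
    tauto
  have hCc : Cᶜ = A ∪ B := by
    ext x
    have h1x := hu' x; have h2x := hd' x
    simp only [Set.mem_union, Set.mem_inter_iff, Set.mem_compl_iff, Set.mem_empty_iff_false]
      at h1x h2x ⊢
    tauto
  constructor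
  · exact ⟨mB, ∅, A ∪ C, MeasurableSet.empty, mA.union mC, by rw [Set.empty_union, hBc],
      Set.empty_inter _, kprec_empty_left _, kprec_union_right h1 h3, kprec_empty_left _⟩
  · exact ⟨mC, A ∪ B, ∅, mA.union mB, MeasurableSet.empty, by rw [Set.union_empty, hCc],
      Set.inter_empty _, kprec_union_left h2 h3, kprec_empty_right _, kprec_empty_right _⟩

lemma memZ_iInter (μ : Measure S) (W : S → S → ℝ) (A : ℕ → Set S)
    (hA : ∀ i, memZ μ W (A i)) : memZ μ W (⋂ i, A i) := by
  choose mA B C mB mC hu hd h1 h2 h3 using hA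
  set T : Set S := ⋂ i, A i with hT
  have hCsub : ∀ i, C i ⊆ Tᶜ := by
    intro i x hx hxT
    have : x ∈ (A i)ᶜ := by rw [← hu i]; exact Or.inr hx
    exact this (Set.mem_iInter.mp hxT i)
  have hCT : (⋃ i, C i) ⊆ Tᶜ := Set.iUnion_subset hCsub
  refine ⟨MeasurableSet.iInter mA, Tᶜ \ ⋃ i, C i, ⋃ i, C i,
    (MeasurableSet.iInter mA).compl.diff (MeasurableSet.iUnion mC),
    MeasurableSet.iUnion mC, ?_, ?_, ?_, ?_, ?_⟩
  · rw [Set.diff_union_self, Set.union_eq_self_of_subset_right hCT]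
  · ext x; simp [Set.mem_diff]
  -- the a.e. statements
  all_goals {
    have H : ∀ᵐ p ∂(μ.prod μ), ∀ i,
        (p.1 ∈ B i → p.2 ∈ A i → W p.1 p.2 = 1) ∧
        (p.1 ∈ A i → p.2 ∈ C i → W p.1 p.2 = 1) ∧
        (p.1 ∈ B i → p.2 ∈ C i → W p.1 p.2 = 1) :=
      ae_all_iff.mpr fun i => ((h1 i).and ((h2 i).and (h3 i)))
    filter_upwards [H] with p hp hx hy
    first
    | -- B' ≺ T
      ( obtain ⟨hxT, hxC⟩ := hx
        obtain ⟨i, hi⟩ : ∃ i, p.1 ∉ A i := by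
          by_contra hcon
          push_neg at hcon
          exact hxT (Set.mem_iInter.mpr hcon)
        have hxBi : p.1 ∈ B i := by
          have : p.1 ∈ B i ∪ C i := by rw [hu i]; exact hi
          rcases this with h | h
          · exact h
          · exact absurd (Set.mem_iUnion.mpr ⟨i, h⟩) hxC
        exact (hp i).1 hxBi (Set.mem_iInter.mp hy i) )
    | -- T ≺ C'
      ( obtain ⟨i, hyi⟩ := Set.mem_iUnion.mp hy
        exact (hp i).2.1 (Set.mem_iInter.mp hx i) hyi )
    | -- B' ≺ C'
      ( obtain ⟨i, hyi⟩ := Set.mem_iUnion.mp hy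
        obtain ⟨hxT, hxC⟩ := hx
        by_cases hxa : p.1 ∈ A i
        · exact (hp i).2.1 hxa hyi
        · have hxBi : p.1 ∈ B i := by
            have : p.1 ∈ B i ∪ C i := by rw [hu i]; exact hxa
            rcases this with h | h
            · exact h
            · exact absurd (Set.mem_iUnion.mpr ⟨i, h⟩) hxC
          exact (hp i).2.2 hxBi hyi ) }

lemma memZ_inter (μ : Measure S) (W : S → S → ℝ) {A A' : Set S}
    (hA : memZ μ W A) (hA' : memZ μ W A') : memZ μ W (A ∩ A') := by
  have := memZ_iInter μ W (fun i => if i = 0 then A else A')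
    (fun i => by by_cases h : i = 0 <;> simp [h, hA, hA'])
  convert this using 1
  ext x
  simp only [Set.mem_inter_iff, Set.mem_iInter]
  constructor
  · intro ⟨h0, h1⟩ i
    by_cases h : i = 0 <;> simp [h, h0, h1]
  · intro h
    exact ⟨by simpa using h 0, by simpa using h 1⟩

end Aux

/-- `Z` is a semi-algebra closed under countable intersections. -/
theorem stmt12 {S : Type*} [MeasurableSpace S] (μ : Measure S) [IsProbabilityMeasure μ]
    (W : S → S → ℝ) (hW : IsTournamentKernel μ W) :
    (memZ μ W (∅ : Set S) ∧ memZ μ W (Set.univ : Set S)) ∧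
    (∀ A : ℕ → Set S, (∀ i : ℕ, memZ μ W (A i)) → memZ μ W (⋂ i : ℕ, A i)) ∧
    (∀ A B : Set S, memZ μ W A → memZ μ W B →
      ∃ (n : ℕ) (D : Fin n → Set S), (∀ i, memZ μ W (D i)) ∧
        (∀ i j, i ≠ j → Disjoint (D i) (D j)) ∧ B \ A = ⋃ i, D i) := by
  refine ⟨⟨?_, ?_⟩, fun A hA => memZ_iInter μ W A hA, ?_⟩
  · exact ⟨MeasurableSet.empty, ∅, Set.univ, MeasurableSet.empty, MeasurableSet.univ,
      by simp, by simp, kprec_empty_left _, kprec_empty_left _, kprec_empty_left _⟩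
  · exact ⟨MeasurableSet.univ, ∅, ∅, MeasurableSet.empty, MeasurableSet.empty,
      by simp, by simp, kprec_empty_left _, kprec_empty_right _, kprec_empty_left _⟩
  · intro A B hA hB
    obtain ⟨mA, P, Q, mP, mQ, hu, hd, h1, h2, h3⟩ := hA
    obtain ⟨hPZ, hQZ⟩ := memZ_pieces mA mP mQ hu hd h1 h2 h3
    refine ⟨2, ![B ∩ P, B ∩ Q], ?_, ?_, ?_⟩
    · intro i
      fin_cases i
      · exact memZ_inter μ W hB hPZ
      · exact memZ_inter μ W hB hQZ
    · intro i j hij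
      fin_cases i <;> fin_cases j <;> simp_all <;>
        · rw [Set.disjoint_iff_inter_eq_empty]
          ext x
          have := Set.ext_iff.mp hd x
          simp only [Set.mem_inter_iff, Set.mem_empty_iff_false] at this ⊢
          tauto
    · have : B \ A = (B ∩ P) ∪ (B ∩ Q) := by
        rw [Set.diff_eq, ← hu, Set.inter_union_distrib_left]
      rw [this]
      ext x
      simp [Fin.exists_fin_two]
end

section
/- Let W be a tournament kernel on a probability space (S, μ), let Z be the associated collection of sets, and let A be an atom of (S, σ(Z), μ). Then the restriction W|_A : A × A → [0,1], regarded as a tournament kernel on the probability space (A, μ(· ∩ A)/μ(A)), is irreducible. -/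
open MeasureTheory

/-- `A` is an atom of the measure space `(S, m, μ)`. -/
def IsAtomOf {S : Type*} {m0 : MeasurableSpace S} (m : MeasurableSpace S)
    (μ : @MeasureTheory.Measure S m0) (A : Set S) : Prop :=
  MeasurableSet[m] A ∧ 0 < μ A ∧
    ¬ ∃ A' : Set S, MeasurableSet[m] A' ∧ A' ⊆ A ∧ 0 < μ A' ∧ μ A' < μ A


/-!
Outside an atom `A` of `σ(Z)`, almost every point lies in an initial segment `L` (`L ≺ Lᶜ`) or a
final segment `R` (`Rᶜ ≺ R`) essentially disjoint from `A`. Hence, if `B ⊆ A` with `B ≺ A \ B`,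
then `B ∪ L` is again an initial segment, so it belongs to `Z`, and `(B ∪ L) ∩ A`, which has the
measure of `B`, is a set of `σ(Z)` strictly between `∅` and `A` in measure.
-/

open Set MeasurableSpace Filter

namespace KPrec

variable {S : Type*} [MeasurableSpace S] {μ : Measure S} {W : S → S → ℝ} {X X' Y Y' : Set S}

lemma empty_left : KPrec μ W ∅ Y :=
  Eventually.of_forall fun _ h => absurd h (notMem_empty _)

lemma mono_ae [SFinite μ] (h : KPrec μ W X Y) (hX : X' ≤ᵐ[μ] X) (hY : Y' ≤ᵐ[μ] Y) :
    KPrec μ W X' Y' := by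
  filter_upwards [h, Measure.quasiMeasurePreserving_fst.ae hX,
    Measure.quasiMeasurePreserving_snd.ae hY] with p hp hpX hpY hx hy
  exact hp (hpX hx) (hpY hy)

lemma union_left (h : KPrec μ W X Y) (h' : KPrec μ W X' Y) : KPrec μ W (X ∪ X') Y := by
  filter_upwards [h, h'] with p hp hp' hx hy
  exact hx.elim (hp · hy) (hp' · hy)

lemma union_right (h : KPrec μ W X Y) (h' : KPrec μ W X Y') : KPrec μ W X (Y ∪ Y') := by
  filter_upwards [h, h'] with p hp hp' hx hy
  exact hy.elim (hp hx ·) (hp' hx ·)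

lemma sUnion_left {𝓧 : Set (Set S)} (h𝓧 : 𝓧.Countable) (h : ∀ X ∈ 𝓧, KPrec μ W X Y) :
    KPrec μ W (⋃₀ 𝓧) Y := by
  filter_upwards [(ae_ball_iff h𝓧).2 h] with p hp hx hy
  obtain ⟨X, hX, hxX⟩ := hx
  exact hp X hX hxX hy

lemma sUnion_right {𝓨 : Set (Set S)} (h𝓨 : 𝓨.Countable) (h : ∀ Y ∈ 𝓨, KPrec μ W X Y) :
    KPrec μ W X (⋃₀ 𝓨) := by
  filter_upwards [(ae_ball_iff h𝓨).2 h] with p hp hx hy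
  obtain ⟨Y, hY, hyY⟩ := hy
  exact hp Y hY hx hyY

lemma measure_mul_eq_zero [SFinite μ] (hsum : ∀ᵐ p ∂(μ.prod μ), W p.1 p.2 + W p.2 p.1 = 1)
    (h : KPrec μ W X Y) (h' : KPrec μ W Y X) : μ X * μ Y = 0 := by
  have h'swap : ∀ᵐ p ∂(μ.prod μ), p.2 ∈ Y → p.1 ∈ X → W p.2 p.1 = 1 :=
    Measure.measurePreserving_swap.quasiMeasurePreserving.ae h'
  have hXY : ∀ᵐ p ∂(μ.prod μ), p ∉ X ×ˢ Y := by
    filter_upwards [h, h'swap, hsum] with p hp hp' hs hpXY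
    linarith [hp hpXY.1 hpXY.2, hp' hpXY.2 hpXY.1]
  rw [← Measure.prod_prod]
  exact measure_eq_zero_iff_ae_notMem.2 hXY

end KPrec

section

variable {S : Type*} [MeasurableSpace S] {μ : Measure S} {W : S → S → ℝ}

def IsInitialSegment (μ : Measure S) (W : S → S → ℝ) (X : Set S) : Prop :=
  MeasurableSet X ∧ KPrec μ W X Xᶜ

def IsFinalSegment (μ : Measure S) (W : S → S → ℝ) (X : Set S) : Prop :=
  MeasurableSet X ∧ KPrec μ W Xᶜ X

lemma IsInitialSegment.compl {X : Set S} (hX : IsInitialSegment μ W X) :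
    IsFinalSegment μ W Xᶜ :=
  ⟨hX.1.compl, by rw [compl_compl]; exact hX.2⟩

lemma IsInitialSegment.memZ {X : Set S} (hX : IsInitialSegment μ W X) : memZ μ W X :=
  ⟨hX.1, ∅, Xᶜ, .empty, hX.1.compl, empty_union _, empty_inter _,
    KPrec.empty_left, hX.2, KPrec.empty_left⟩

lemma IsInitialSegment.sUnion [SFinite μ] {𝓘 : Set (Set S)} (h𝓘 : 𝓘.Countable)
    (h : ∀ I ∈ 𝓘, IsInitialSegment μ W I) : IsInitialSegment μ W (⋃₀ 𝓘) :=
  ⟨.sUnion h𝓘 fun I hI => (h I hI).1, KPrec.sUnion_left h𝓘 fun I hI =>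
    (h I hI).2.mono_ae EventuallyLE.rfl
      (compl_subset_compl.2 (subset_sUnion_of_mem hI)).eventuallyLE⟩

lemma IsFinalSegment.sUnion [SFinite μ] {𝓕 : Set (Set S)} (h𝓕 : 𝓕.Countable)
    (h : ∀ F ∈ 𝓕, IsFinalSegment μ W F) : IsFinalSegment μ W (⋃₀ 𝓕) :=
  ⟨.sUnion h𝓕 fun F hF => (h F hF).1, KPrec.sUnion_right h𝓕 fun F hF =>
    (h F hF).2.mono_ae (compl_subset_compl.2 (subset_sUnion_of_mem hF)).eventuallyLE
      EventuallyLE.rfl⟩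

/-- A member `C` of `Z` with partition `{B, C'}` of `Cᶜ` is `C'ᶜ \ B`, where `B` and `C'ᶜ = B ∪ C`
are initial segments. -/
lemma memZ.measurableSet_generateFrom_isInitialSegment {C : Set S} (hC : memZ μ W C) :
    MeasurableSet[generateFrom {I | IsInitialSegment μ W I}] C := by
  obtain ⟨hCm, B, C', hBm, hC'm, hunion, hdisj, hBC, hCC', hBC'⟩ := hC
  have hcompls : Bᶜ = C ∪ C' ∧ C'ᶜ = B ∪ C := by
    constructor <;> ext x <;>
    · have := congrArg (x ∈ ·) hunion
      have := congrArg (x ∈ ·) hdisj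
      simp only [mem_union, mem_inter_iff, mem_compl_iff, mem_empty_iff_false, eq_iff_iff] at *
      tauto
  have hB : IsInitialSegment μ W B := ⟨hBm, by rw [hcompls.1]; exact hBC.union_right hBC'⟩
  have hC'c : IsInitialSegment μ W C'ᶜ :=
    ⟨hC'm.compl, by rw [compl_compl, hcompls.2]; exact hBC'.union_left hCC'⟩
  have hCeq : C = Bᶜ ∩ C'ᶜ := by rw [← compl_union, hunion, compl_compl]
  rw [hCeq]
  exact (measurableSet_generateFrom hB).compl.inter (measurableSet_generateFrom hC'c)

end

section

variable {S : Type*} {m0 : MeasurableSpace S} {μ : Measure S}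

lemma IsAtomOf.measure_inter_eq_zero_or_measure_sdiff_eq_zero [IsFiniteMeasure μ]
    {m : MeasurableSpace S} {A D : Set S} (hA : IsAtomOf m μ A) (hm : m ≤ m0)
    (hD : MeasurableSet[m] D) : μ (A ∩ D) = 0 ∨ μ (A \ D) = 0 := by
  by_contra! h
  refine hA.2.2 ⟨A ∩ D, hA.1.inter hD, inter_subset_left, pos_iff_ne_zero.2 h.1, ?_⟩
  calc μ (A ∩ D) < μ (A ∩ D) + μ (A \ D) := ENNReal.lt_add_right (measure_ne_top _ _) h.2
    _ = μ A := measure_inter_add_sdiff A (hm D hD)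

lemma measure_inter_eq_zero_or_measure_sdiff_eq_zero_of_generateFrom {𝓒 : Set (Set S)}
    {K D : Set S} (h𝓒 : ∀ C ∈ 𝓒, μ (K ∩ C) = 0 ∨ μ (K \ C) = 0)
    (hD : MeasurableSet[generateFrom 𝓒] D) : μ (K ∩ D) = 0 ∨ μ (K \ D) = 0 := by
  induction D, hD using generateFrom_induction with
  | hC C hC => exact h𝓒 C hC
  | empty => simp
  | compl D _ ih => rwa [← sdiff_eq, sdiff_compl, or_comm]
  | iUnion D _ ih =>
    by_cases hall : ∀ n, μ (K ∩ D n) = 0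
    · exact .inl (by rw [inter_iUnion]; exact measure_iUnion_null hall)
    · push Not at hall
      obtain ⟨n, hn⟩ := hall
      exact .inr (measure_mono_null (sdiff_subset_sdiff_right (subset_iUnion D n))
        ((ih n).resolve_left hn))

lemma exists_ae_le_sUnion_mem [SFinite μ] {𝓒 : Set (Set S)} (h𝓒 : ∀ C ∈ 𝓒, MeasurableSet C)
    (hsUnion : ∀ 𝓓 ⊆ 𝓒, 𝓓.Countable → ⋃₀ 𝓓 ∈ 𝓒) : ∃ L ∈ 𝓒, ∀ C ∈ 𝓒, C ≤ᵐ[μ] L := by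
  obtain ⟨𝓓, h𝓓𝓒, h𝓓, hle⟩ := Measure.exists_ae_subset_biUnion_countable μ h𝓒
  exact ⟨⋃₀ 𝓓, hsUnion 𝓓 h𝓓𝓒 h𝓓, hle⟩

end

section

variable {S : Type*} [MeasurableSpace S] {μ : Measure S} {W : S → S → ℝ} {A : Set S}

/-- Up to null sets, an atom of `σ(Z)` is the gap between an initial segment `L` and a final
segment `R`: both are maximal among the segments essentially disjoint from `A`, and every initial
segment then essentially contains or misses the gap, hence so does every set of `σ(Z)`. -/
theorem IsAtomOf.exists_gap [IsFiniteMeasure μ]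
    (hA : IsAtomOf (generateFrom {B | memZ μ W B}) μ A) :
    ∃ L R, IsInitialSegment μ W L ∧ IsFinalSegment μ W R ∧ μ (A ∩ L) = 0 ∧ μ (A ∩ R) = 0 ∧
      ((L ∪ R)ᶜ : Set S) ≤ᵐ[μ] A := by
  have hm : generateFrom {B | memZ μ W B} ≤ ‹MeasurableSpace S› :=
    generateFrom_le fun C hC => hC.1
  have hAI : ∀ I, IsInitialSegment μ W I → μ (A ∩ I) = 0 ∨ μ (A \ I) = 0 := fun I hI =>
    hA.measure_inter_eq_zero_or_measure_sdiff_eq_zero hm (measurableSet_generateFrom hI.memZ)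
  have hnull (𝓓 : Set (Set S)) (h𝓓 : 𝓓.Countable) (h : ∀ D ∈ 𝓓, μ (A ∩ D) = 0) :
      μ (A ∩ ⋃₀ 𝓓) = 0 := by
    rw [sUnion_eq_biUnion, inter_iUnion₂]
    exact (measure_biUnion_null_iff h𝓓).2 h
  obtain ⟨L, ⟨hL, hAL⟩, hLmax⟩ := exists_ae_le_sUnion_mem (μ := μ)
    (𝓒 := {I | IsInitialSegment μ W I ∧ μ (A ∩ I) = 0}) (fun I hI => hI.1.1)
    fun 𝓓 h𝓓 hc =>
      And.intro (.sUnion hc fun I hI => (h𝓓 hI).1) (hnull 𝓓 hc fun I hI => (h𝓓 hI).2)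
  obtain ⟨R, ⟨hR, hAR⟩, hRmax⟩ := exists_ae_le_sUnion_mem (μ := μ)
    (𝓒 := {F | IsFinalSegment μ W F ∧ μ (A ∩ F) = 0}) (fun F hF => hF.1.1)
    fun 𝓓 h𝓓 hc =>
      And.intro (.sUnion hc fun F hF => (h𝓓 hF).1) (hnull 𝓓 hc fun F hF => (h𝓓 hF).2)
  refine ⟨L, R, hL, hR, hAL, hAR, ?_⟩
  have hgapI : ∀ I, IsInitialSegment μ W I →
      μ ((L ∪ R)ᶜ ∩ I) = 0 ∨ μ ((L ∪ R)ᶜ \ I) = 0 := by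
    intro I hI
    refine (hAI I hI).imp (fun h => ?_) (fun h => ?_)
    · refine measure_mono_null ?_ (ae_le_set.1 (hLmax I ⟨hI, h⟩))
      exact fun x hx => ⟨hx.2, fun hxL => hx.1 (.inl hxL)⟩
    · refine measure_mono_null ?_ (ae_le_set.1 (hRmax Iᶜ ⟨hI.compl, by rwa [← sdiff_eq]⟩))
      exact fun x hx => ⟨hx.2, fun hxR => hx.1 (.inr hxR)⟩
  have hAσ : MeasurableSet[generateFrom {I | IsInitialSegment μ W I}] A :=
    generateFrom_le (fun C hC => memZ.measurableSet_generateFrom_isInitialSegment hC) A hA.1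
  refine ae_le_set.2 ((measure_inter_eq_zero_or_measure_sdiff_eq_zero_of_generateFrom hgapI
    hAσ).resolve_left fun h => hA.2.1.ne' (measure_mono_null ?_ (measure_union_null
      (measure_union_null h hAL) hAR)))
  intro x hxA
  by_cases hxL : x ∈ L
  · exact .inl (.inr ⟨hxA, hxL⟩)
  by_cases hxR : x ∈ R
  · exact .inr ⟨hxA, hxR⟩
  exact .inl (.inl ⟨fun h => h.elim hxL hxR, hxA⟩)

/-- If `B ≺ A \ B` inside the gap `A` between `L` and `R`, then `B ∪ L ≺ R ∪ (A \ B)`, and the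
latter is essentially the complement of `B ∪ L`. -/
theorem isInitialSegment_union_of_gap [SFinite μ]
    (hsum : ∀ᵐ p ∂(μ.prod μ), W p.1 p.2 + W p.2 p.1 = 1)
    {L R B : Set S} (hL : IsInitialSegment μ W L) (hR : IsFinalSegment μ W R)
    (hAL : μ (A ∩ L) = 0) (hAR : μ (A ∩ R) = 0) (hgap : ((L ∪ R)ᶜ : Set S) ≤ᵐ[μ] A)
    (hA0 : μ A ≠ 0)
    (hBm : MeasurableSet B) (hBA : B ⊆ A) (hBprec : KPrec μ W B (A \ B)) :
    IsInitialSegment μ W (B ∪ L) := by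
  have hAL' : A ≤ᵐ[μ] (Lᶜ : Set S) := ae_le_set.2 (by rwa [Set.sdiff_compl])
  have hAR' : A ≤ᵐ[μ] (Rᶜ : Set S) := ae_le_set.2 (by rwa [Set.sdiff_compl])
  have hLR : L ≤ᵐ[μ] (Rᶜ : Set S) := by
    refine ae_le_set.2 ?_
    rw [Set.sdiff_compl]
    refine (mul_eq_zero.1 (KPrec.measure_mul_eq_zero hsum (X := L ∩ R) ?_ ?_)).resolve_right hA0
    · exact hL.2.mono_ae inter_subset_left.eventuallyLE hAL'
    · exact hR.2.mono_ae hAR' inter_subset_right.eventuallyLE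
  have hcompl : ((B ∪ L)ᶜ : Set S) ≤ᵐ[μ] (R ∪ (A \ B) : Set S) := by
    refine ae_le_set.2 (measure_mono_null (fun x hx => ?_) (ae_le_set.1 hgap))
    simp only [Set.mem_sdiff, mem_compl_iff, mem_union] at hx ⊢
    tauto
  refine ⟨hBm.union hL.1, KPrec.mono_ae ?_ EventuallyLE.rfl hcompl⟩
  refine .union_left (.union_right ?_ hBprec) (.union_right ?_ ?_)
  · exact hR.2.mono_ae (hBA.eventuallyLE.trans hAR') EventuallyLE.rfl
  · exact hR.2.mono_ae hLR EventuallyLE.rfl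
  · exact hL.2.mono_ae EventuallyLE.rfl (sdiff_subset.eventuallyLE.trans hAL')

end

/-- The restriction of a tournament kernel to an atom of `(S, σ(Z), μ)`, regarded as a
kernel on the normalized probability space on the atom, is irreducible: there is no
measurable `B ⊆ A` of strictly intermediate measure with `W = 1` a.e. on `B × (A \ B)`. -/
theorem stmt14 {S : Type*} [MeasurableSpace S] (μ : Measure S) [IsProbabilityMeasure μ]
    (W : S → S → ℝ) (hW : IsTournamentKernel μ W) (A : Set S)
    (hA : IsAtomOf (MeasurableSpace.generateFrom {B : Set S | memZ μ W B}) μ A) :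
    ¬ ∃ B : Set S, MeasurableSet B ∧ B ⊆ A ∧ 0 < μ B ∧ μ B < μ A ∧
      ∀ᵐ p ∂(μ.prod μ), p.1 ∈ B → p.2 ∈ A \ B → W p.1 p.2 = 1 := by
  rintro ⟨B, hBm, hBA, hB0, hBA_lt, hBprec⟩
  obtain ⟨L, R, hL, hR, hAL, hAR, hgap⟩ := hA.exists_gap
  have hD : IsInitialSegment μ W (B ∪ L) :=
    isInitialSegment_union_of_gap hW.2.2 hL hR hAL hAR hgap hA.2.1.ne' hBm hBA hBprec
  refine hA.2.2 ⟨(B ∪ L) ∩ A, (measurableSet_generateFrom hD.memZ).inter hA.1,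
    inter_subset_right, hB0.trans_le (measure_mono fun x hx => ⟨.inl hx, hBA hx⟩), ?_⟩
  calc μ ((B ∪ L) ∩ A) ≤ μ (B ∪ A ∩ L) :=
        measure_mono fun x hx => hx.1.imp_right fun hxL => ⟨hx.2, hxL⟩
    _ ≤ μ B + μ (A ∩ L) := measure_union_le _ _
    _ < μ A := by rwa [hAL, add_zero]
end

section
/- Let W be a tournament kernel on a probability space (S, μ), let Z be the associated collection of sets, and define ν(A×B×C) = ∫_{A×B×C} W(x,y)W(y,z)W(z,x) dμ(x)dμ(y)dμ(z) for measurable A, B, C ⊆ S. Then: (a) if A_1, A_2, A_3 ∈ Z and μ(A_i ∩ A_j) = 0 for some i ≠ j, then ν(A_1 × A_2 × A_3) = 0; (b) for all A, B, C ∈ Z, ν(A × B × C) ≤ μ(A ∩ B ∩ C)³. -/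
/-!
Each `A ∈ Z` comes with the three blocks `B ≺ A ≺ C`, i.e. a ranking of `S` (`B` below `A`
below `C`) such that, almost surely, `W` vanishes on every edge pointing down the ranking. A
cycle `x → y → z → x` of positive weight can therefore never go down, so it stays inside one
block. Hence if `x ∈ A₁`, `y ∈ A₂`, `z ∈ A₃` carry positive weight, all three points lie in
`K = A₁ ∩ A₂ ∩ A₃`, the integrand is bounded by `1_K(x) 1_K(y) 1_K(z)`, and integrating gives
`μ(K)³`. Part (a) is the special case `μ(K) = 0`.
-/

open MeasureTheory

section

variable {S : Type*} [MeasurableSpace S]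

/-- The paper's `ν(A × B × C)`. -/
noncomputable def cycleIntegral (μ : Measure S) (W : S → S → ℝ) (A B C : Set S) : ℝ :=
  ∫ x in A, ∫ y in B, ∫ z in C, W x y * W y z * W z x ∂μ ∂μ ∂μ

theorem cycleIntegral_nonneg {μ : Measure S} {W : S → S → ℝ} (hW : ∀ x y, 0 ≤ W x y)
    (A B C : Set S) : 0 ≤ cycleIntegral μ W A B C :=
  integral_nonneg fun _ => integral_nonneg fun _ => integral_nonneg fun _ =>
    mul_nonneg (mul_nonneg (hW _ _) (hW _ _)) (hW _ _)

theorem rank_eq_of_cycle_ne_zero {α β : Type*} [PartialOrder β] {W : α → α → ℝ} {r : α → β}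
    {x y z : α} (hxy : W x y ≠ 0 → r x ≤ r y) (hyz : W y z ≠ 0 → r y ≤ r z)
    (hzx : W z x ≠ 0 → r z ≤ r x) (h : W x y * W y z * W z x ≠ 0) :
    r x = r y ∧ r y = r z := by
  simp only [ne_eq, mul_eq_zero, not_or] at h
  obtain ⟨⟨h₁, h₂⟩, h₃⟩ := h
  exact ⟨le_antisymm (hxy h₁) ((hyz h₂).trans (hzx h₃)),
    le_antisymm (hyz h₂) ((hzx h₃).trans (hxy h₁))⟩

theorem memZ.exists_rank {μ : Measure S} [SFinite μ] {W : S → S → ℝ} {A : Set S} (hA : memZ μ W A)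
    (hW : ∀ᵐ p ∂μ.prod μ, W p.1 p.2 + W p.2 p.1 = 1) :
    ∃ r : S → ℕ, (∀ u, u ∈ A ↔ r u = 1) ∧
      ∀ᵐ p ∂μ.prod μ, W p.1 p.2 ≠ 0 → r p.1 ≤ r p.2 := by
  classical
  obtain ⟨-, B, C, -, -, hBC, -, hBA, hAC, hBC'⟩ := hA
  have hmem : ∀ u, u ∉ A ↔ u ∈ B ∨ u ∈ C := fun u => by
    rw [← Set.mem_union, hBC, Set.mem_compl_iff]
  set r : S → ℕ := fun u => if u ∈ B then 0 else if u ∈ A then 1 else 2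
  have hr : ∀ u, (u ∈ B ∧ u ∉ A ∧ r u = 0) ∨ (u ∈ A ∧ r u = 1) ∨ (u ∈ C ∧ u ∉ A ∧ r u = 2) :=
    fun u => by
      by_cases huB : u ∈ B
      · simp [r, huB, (hmem u).2 (.inl huB)]
      by_cases huA : u ∈ A
      · simp [r, huB, huA]
      · simp [r, huB, huA, ((hmem u).1 huA).resolve_left huB]
  refine ⟨r, fun u => ?_, ?_⟩
  · rcases hr u with ⟨-, hu, hru⟩ | ⟨hu, hru⟩ | ⟨-, hu, hru⟩ <;> simp [hu, hru]
  · have hdown : ∀ᵐ p ∂μ.prod μ, r p.1 < r p.2 → W p.2 p.1 = 0 := by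
      filter_upwards [hW, hBA, hAC, hBC'] with p hsum hBA hAC hBC' hlt
      have : W p.1 p.2 = 1 := by
        rcases hr p.1 with ⟨h₁, -, hr₁⟩ | ⟨h₁, hr₁⟩ | ⟨h₁, -, hr₁⟩ <;>
        rcases hr p.2 with ⟨h₂, -, hr₂⟩ | ⟨h₂, hr₂⟩ | ⟨h₂, -, hr₂⟩ <;>
        first | omega | exact hBA h₁ h₂ | exact hAC h₁ h₂ | exact hBC' h₁ h₂
      linarith
    filter_upwards [Measure.measurePreserving_swap.quasiMeasurePreserving.ae hdown]
      with p hp hne using not_lt.1 (mt hp hne)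

theorem ae_cyclic_of_ae_prod {μ : Measure S} [SFinite μ] {P : S → S → Prop}
    (h : ∀ᵐ p ∂μ.prod μ, P p.1 p.2) : ∀ᵐ x ∂μ, ∀ᵐ y ∂μ, ∀ᵐ z ∂μ, P x y ∧ P y z ∧ P z x := by
  have hswap : ∀ᵐ p ∂μ.prod μ, P p.2 p.1 :=
    Measure.measurePreserving_swap.quasiMeasurePreserving.ae h
  filter_upwards [Measure.ae_ae_of_ae_prod h, Measure.ae_ae_of_ae_prod hswap] with x hxy hzx
  filter_upwards [hxy, Measure.ae_ae_of_ae_prod h] with y hxy hyz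
  filter_upwards [hyz, hzx] with z hyz hzx using ⟨hxy, hyz, hzx⟩

theorem integral_integral_integral_le_mul {α β γ : Type*} [MeasurableSpace α]
    [MeasurableSpace β] [MeasurableSpace γ] {ν₁ : Measure α} {ν₂ : Measure β} {ν₃ : Measure γ}
    {f : α → β → γ → ℝ} {g₁ : α → ℝ} {g₂ : β → ℝ} {g₃ : γ → ℝ} (hf : ∀ x y z, 0 ≤ f x y z)
    (hg₁ : Integrable g₁ ν₁) (hg₂ : Integrable g₂ ν₂) (hg₃ : Integrable g₃ ν₃)
    (h : ∀ᵐ x ∂ν₁, ∀ᵐ y ∂ν₂, ∀ᵐ z ∂ν₃, f x y z ≤ g₁ x * g₂ y * g₃ z) :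
    ∫ x, ∫ y, ∫ z, f x y z ∂ν₃ ∂ν₂ ∂ν₁ ≤
      (∫ x, g₁ x ∂ν₁) * (∫ y, g₂ y ∂ν₂) * ∫ z, g₃ z ∂ν₃ := by
  have inner : ∀ᵐ x ∂ν₁, ∫ y, ∫ z, f x y z ∂ν₃ ∂ν₂ ≤
      g₁ x * (∫ y, g₂ y ∂ν₂) * ∫ z, g₃ z ∂ν₃ := by
    filter_upwards [h] with x hx
    have hy : ∀ᵐ y ∂ν₂, ∫ z, f x y z ∂ν₃ ≤ g₁ x * g₂ y * ∫ z, g₃ z ∂ν₃ := by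
      filter_upwards [hx] with y hy
      calc ∫ z, f x y z ∂ν₃ ≤ ∫ z, g₁ x * g₂ y * g₃ z ∂ν₃ :=
            integral_mono_of_nonneg (.of_forall (hf x y)) (hg₃.const_mul _) hy
        _ = g₁ x * g₂ y * ∫ z, g₃ z ∂ν₃ := integral_const_mul _ _
    calc ∫ y, ∫ z, f x y z ∂ν₃ ∂ν₂ ≤ ∫ y, g₁ x * g₂ y * ∫ z, g₃ z ∂ν₃ ∂ν₂ :=
          integral_mono_of_nonneg (.of_forall fun y => integral_nonneg (hf x y))
            ((hg₂.const_mul _).mul_const _) hy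
      _ = g₁ x * (∫ y, g₂ y ∂ν₂) * ∫ z, g₃ z ∂ν₃ := by
          rw [integral_mul_const, integral_const_mul]
  calc ∫ x, ∫ y, ∫ z, f x y z ∂ν₃ ∂ν₂ ∂ν₁
      ≤ ∫ x, g₁ x * (∫ y, g₂ y ∂ν₂) * ∫ z, g₃ z ∂ν₃ ∂ν₁ :=
        integral_mono_of_nonneg
          (.of_forall fun x => integral_nonneg fun y => integral_nonneg (hf x y))
          ((hg₁.mul_const _).mul_const _) inner
    _ = _ := by rw [integral_mul_const, integral_mul_const]

theorem ae_mem_inter_of_cycle_ne_zero {μ : Measure S} [SFinite μ] {W : S → S → ℝ}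
    (hW : ∀ᵐ p ∂μ.prod μ, W p.1 p.2 + W p.2 p.1 = 1) {A B C : Set S} (hA : memZ μ W A)
    (hB : memZ μ W B) (hC : memZ μ W C) :
    ∀ᵐ x ∂μ.restrict A, ∀ᵐ y ∂μ.restrict B, ∀ᵐ z ∂μ.restrict C, W x y * W y z * W z x ≠ 0 →
      x ∈ A ∩ B ∩ C ∧ y ∈ A ∩ B ∩ C ∧ z ∈ A ∩ B ∩ C := by
  obtain ⟨rA, hrA, hWrA⟩ := hA.exists_rank hW
  obtain ⟨rB, hrB, hWrB⟩ := hB.exists_rank hW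
  obtain ⟨rC, hrC, hWrC⟩ := hC.exists_rank hW
  let r : S → ℕ × ℕ × ℕ := fun u => (rA u, rB u, rC u)
  have hWr : ∀ᵐ p ∂μ.prod μ, W p.1 p.2 ≠ 0 → r p.1 ≤ r p.2 := by
    filter_upwards [hWrA, hWrB, hWrC] with p hpA hpB hpC hne
      using ⟨hpA hne, hpB hne, hpC hne⟩
  have hcycle := ae_cyclic_of_ae_prod (P := fun u v => W u v ≠ 0 → r u ≤ r v) hWr
  filter_upwards [ae_restrict_of_ae hcycle, ae_restrict_mem hA.1] with x hx hxA
  filter_upwards [ae_restrict_of_ae hx, ae_restrict_mem hB.1] with y hy hyB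
  filter_upwards [ae_restrict_of_ae hy, ae_restrict_mem hC.1] with z ⟨hxy, hyz, hzx⟩ hzC hne
  obtain ⟨hrxy, hryz⟩ := rank_eq_of_cycle_ne_zero hxy hyz hzx hne
  simp only [r, Prod.mk.injEq] at hrxy hryz
  simp only [Set.mem_inter_iff, hrA, hrB, hrC] at hxA hyB hzC ⊢
  omega

theorem cycleIntegral_le {μ : Measure S} [IsFiniteMeasure μ] {W : S → S → ℝ}
    (hW : IsTournamentKernel μ W) {A B C : Set S} (hA : memZ μ W A) (hB : memZ μ W B)
    (hC : memZ μ W C) : cycleIntegral μ W A B C ≤ μ.real (A ∩ B ∩ C) ^ 3 := by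
  obtain ⟨-, hW01, hWsum⟩ := hW
  set K := A ∩ B ∩ C
  have hK : MeasurableSet K := (hA.1.inter hB.1).inter hC.1
  set g := K.indicator (1 : S → ℝ)
  have hg0 : ∀ u, 0 ≤ g u := Set.indicator_nonneg fun _ _ => zero_le_one
  have hgK : ∀ u ∈ K, g u = 1 := fun _ hu => Set.indicator_of_mem hu _
  have hbound : ∀ᵐ x ∂μ.restrict A, ∀ᵐ y ∂μ.restrict B, ∀ᵐ z ∂μ.restrict C,
      W x y * W y z * W z x ≤ g x * g y * g z := by
    filter_upwards [ae_mem_inter_of_cycle_ne_zero hWsum hA hB hC] with x hx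
    filter_upwards [hx] with y hy
    filter_upwards [hy] with z hz
    by_cases h0 : W x y * W y z * W z x = 0
    · rw [h0]; exact mul_nonneg (mul_nonneg (hg0 x) (hg0 y)) (hg0 z)
    obtain ⟨hxK, hyK, hzK⟩ := hz h0
    rw [hgK x hxK, hgK y hyK, hgK z hzK, one_mul, one_mul]
    exact mul_le_one₀ (mul_le_one₀ (hW01 x y).2 (hW01 y z).1 (hW01 y z).2) (hW01 z x).1
      (hW01 z x).2
  have hint : ∀ D, K ⊆ D → ∫ u in D, g u ∂μ = μ.real K := fun D hKD => by
    rw [integral_indicator_one hK, measureReal_restrict_apply hK, Set.inter_eq_left.2 hKD]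
  have hg : ∀ D : Set S, Integrable g (μ.restrict D) := fun _ =>
    (integrable_const (1 : ℝ)).indicator hK
  calc cycleIntegral μ W A B C ≤ _ :=
        integral_integral_integral_le_mul
          (fun x y z => mul_nonneg (mul_nonneg (hW01 x y).1 (hW01 y z).1) (hW01 z x).1)
          (hg A) (hg B) (hg C) hbound
    _ = μ.real K ^ 3 := by
        rw [hint A fun _ h => h.1.1, hint B fun _ h => h.1.2, hint C fun _ h => h.2]; ring

end

/-- Bounds for `ν(A × B × C) = ∫_{A×B×C} W(x,y) W(y,z) W(z,x) dμ³` on elements of `Z`: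
(a) it vanishes whenever two of the three sets essentially do not meet;
(b) in general it is at most `μ(A ∩ B ∩ C)³`. -/
theorem stmt16 {S : Type*} [MeasurableSpace S] (μ : Measure S) [IsProbabilityMeasure μ]
    (W : S → S → ℝ) (hW : IsTournamentKernel μ W) :
    (∀ A1 A2 A3 : Set S, memZ μ W A1 → memZ μ W A2 → memZ μ W A3 →
      (μ (A1 ∩ A2) = 0 ∨ μ (A1 ∩ A3) = 0 ∨ μ (A2 ∩ A3) = 0) →
      (∫ x in A1, ∫ y in A2, ∫ z in A3, W x y * W y z * W z x ∂μ ∂μ ∂μ) = 0) ∧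
    (∀ A B C : Set S, memZ μ W A → memZ μ W B → memZ μ W C →
      (∫ x in A, ∫ y in B, ∫ z in C, W x y * W y z * W z x ∂μ ∂μ ∂μ) ≤
        (μ (A ∩ B ∩ C)).toReal ^ 3) := by
  refine ⟨fun A B C hA hB hC hnull => ?_, fun A B C hA hB hC => cycleIntegral_le hW hA hB hC⟩
  have hK : μ (A ∩ B ∩ C) = 0 := by
    rcases hnull with h | h | h <;> refine measure_mono_null (fun u hu => ?_) h
    exacts [hu.1, ⟨hu.1.1, hu.2⟩, ⟨hu.1.2, hu.2⟩]
  have hle := cycleIntegral_le hW hA hB hC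
  rw [measureReal_def, hK, ENNReal.toReal_zero, zero_pow three_ne_zero] at hle
  exact le_antisymm hle (cycleIntegral_nonneg (fun x y => (hW.2.1 x y).1) A B C)
end

section
/- Let W be a tournament kernel on a probability space (S, μ), let Z be the associated collection of sets, let σ(Z) be the σ-algebra generated by Z, and let I ⊆ S be the non-atomic part of (S, σ(Z), μ), i.e. the complement of the union of all atoms of (S, σ(Z), μ). Then ∫_{I×I×I} W(x,y)W(y,z)W(z,x) dμ(x)dμ(y)dμ(z) = 0; in particular, if μ(I) > 0, the restriction of W to I has t(C_3, W|_I) = 0. -/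
/-!
Call a measurable set `B` *dominant* if `B ≺ Bᶜ`. Two dominant sets are nested up to a null
set, and every member `A` of `Z` with partition `{B, C}` is the difference `(B ∪ A) \ B` of two
dominant sets. Choose dominant sets `B n` whose measures are dense among the measures of all
dominant sets; then every dominant set, hence every set of `σ(Z)`, agrees a.e. with a set of
`σ(B n)`. So every cell of the partition generated by the `B n` of positive measure is an atom
of `σ(Z)`, and on the non-atomic part `I` almost every two points lie in different cells.
Finally, for a.e. `(x, y)`, `W x y ≠ 0` forces every `B n` containing `y` to contain `x`;
around a cycle `x → y → z → x` this puts `x` and `y` in the same cell.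
-/

open MeasureTheory

/-- The non-atomic part of `(S, m, μ)`: the complement of the union of all atoms. -/
def nonAtomicPart {S : Type*} {m0 : MeasurableSpace S} (m : MeasurableSpace S)
    (μ : @MeasureTheory.Measure S m0) : Set S :=
  (⋃₀ {A : Set S | IsAtomOf m μ A})ᶜ


open MeasurableSpace Set Filter

lemma mul_mul_eq_zero_of_isTrans {α : Type*} {r : α → α → Prop} [IsTrans α r]
    {W : α → α → ℝ} {x y z : α} (hxy : W x y ≠ 0 → r x y) (hyz : W y z ≠ 0 → r y z)
    (hzx : W z x ≠ 0 → r z x) (hasymm : ¬ (r x y ∧ r y x)) : W x y * W y z * W z x = 0 := by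
  by_contra h
  simp only [mul_ne_zero_iff] at h
  exact hasymm ⟨hxy h.1.1, _root_.trans (hyz h.1.2) (hzx h.2)⟩

section ProductAE

variable {α : Type*} [MeasurableSpace α] {ν : Measure α} [SFinite ν]

lemma ae_ae_ae_cyclic_of_ae_prod {P : α → α → Prop} (h : ∀ᵐ p ∂ν.prod ν, P p.1 p.2) :
    ∀ᵐ x ∂ν, ∀ᵐ y ∂ν, ∀ᵐ z ∂ν, P x y ∧ P y z ∧ P z x := by
  have h_swap : ∀ᵐ p ∂ν.prod ν, P p.2 p.1 :=
    Measure.measurePreserving_swap.quasiMeasurePreserving.ae h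
  have hxy := Measure.ae_ae_of_ae_prod h
  have hyx := Measure.ae_ae_of_ae_prod h_swap
  filter_upwards [hxy, hyx] with x hx hx'
  filter_upwards [hx, hxy] with y hxy hy
  filter_upwards [hy, hx'] with z hyz hzx
  exact ⟨hxy, hyz, hzx⟩

theorem integral_cycle_eq_zero_of_ae_prod {r : α → α → Prop} [IsTrans α r]
    {W : α → α → ℝ}
    (h : ∀ᵐ p ∂ν.prod ν, (W p.1 p.2 ≠ 0 → r p.1 p.2) ∧ ¬ (r p.1 p.2 ∧ r p.2 p.1)) :
    ∫ x, ∫ y, ∫ z, W x y * W y z * W z x ∂ν ∂ν ∂ν = 0 := by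
  refine integral_eq_zero_of_ae ?_
  filter_upwards [ae_ae_ae_cyclic_of_ae_prod
    (P := fun x y => (W x y ≠ 0 → r x y) ∧ ¬ (r x y ∧ r y x)) h] with x hx
  refine integral_eq_zero_of_ae ?_
  filter_upwards [hx] with y hy
  refine integral_eq_zero_of_ae ?_
  filter_upwards [hy] with z ⟨hxy, hyz, hzx⟩
  exact mul_mul_eq_zero_of_isTrans hxy.1 hyz.1 hzx.1 hxy.2

end ProductAE

section Cells

variable {α ι : Type*} (B : ι → Set α)

def cell (x : α) : Set α := {y | ∀ i, y ∈ B i ↔ x ∈ B i}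

def WeaklyAbove (x y : α) : Prop := ∀ i, y ∈ B i → x ∈ B i

instance : IsTrans α (WeaklyAbove B) :=
  ⟨fun _ _ _ hxy hyz i hz => hxy i (hyz i hz)⟩

variable {B}

lemma mem_cell_self (x : α) : x ∈ cell B x := fun _ => Iff.rfl

lemma mem_cell_of_weaklyAbove {x y : α} (hxy : WeaklyAbove B x y) (hyx : WeaklyAbove B y x) :
    y ∈ cell B x :=
  fun i => ⟨hxy i, hyx i⟩

lemma measurableSet_generateFrom_cell [Countable ι] (x : α) :
    MeasurableSet[generateFrom (range B)] (cell B x) := by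
  let : MeasurableSpace α := generateFrom (range B)
  exact Measurable.setOf (Measurable.forall fun i =>
    (measurableSet_generateFrom (mem_range_self i)).mem.iff measurable_const)

lemma measurableSet_setOf_mem_cell [Countable ι] [MeasurableSpace α]
    (hB : ∀ i, MeasurableSet (B i)) : MeasurableSet {p : α × α | p.2 ∈ cell B p.1} :=
  Measurable.setOf (Measurable.forall fun i =>
    ((hB i).mem.comp measurable_snd).iff ((hB i).mem.comp measurable_fst))

lemma mem_iff_of_mem_cell {E : Set α} (hE : MeasurableSet[generateFrom (range B)] E) {x y : α}
    (hy : y ∈ cell B x) : y ∈ E ↔ x ∈ E := by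
  induction E, hE using generateFrom_induction with
  | hC _ hs => obtain ⟨i, rfl⟩ := hs; exact hy i
  | empty => exact Iff.rfl
  | compl _ _ ih => exact not_congr ih
  | iUnion _ _ ih => simp only [mem_iUnion]; exact exists_congr ih

lemma isAtomOf_cell [Countable ι] {m m0 : MeasurableSpace α} {μ : Measure[m0] α}
    (hBm : ∀ i, MeasurableSet[m] (B i))
    (happrox : ∀ A, MeasurableSet[m] A →
      ∃ E, MeasurableSet[generateFrom (range B)] E ∧ A =ᵐ[μ] E)
    {x : α} (hpos : 0 < μ (cell B x)) : IsAtomOf m μ (cell B x) := by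
  have hle : generateFrom (range B) ≤ m := generateFrom_le (forall_mem_range.2 hBm)
  refine ⟨hle _ (measurableSet_generateFrom_cell x), hpos, ?_⟩
  rintro ⟨A, hA, hAx, hApos, hAlt⟩
  obtain ⟨E, hE, hAE⟩ := happrox A hA
  by_cases hxE : x ∈ E
  · have hxE : cell B x ⊆ E := fun y hy => (mem_iff_of_mem_cell hE hy).2 hxE
    exact hAlt.not_ge ((measure_mono hxE).trans (measure_congr hAE).ge)
  · have hA_sub : A ⊆ A \ E := fun y hy =>
      ⟨hy, fun hyE => hxE ((mem_iff_of_mem_cell hE (hAx hy)).1 hyE)⟩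
    exact hApos.ne' (measure_mono_null hA_sub (ae_eq_set.1 hAE).1)

lemma ae_restrict_prod_notMem_cell [Countable ι] [MeasurableSpace α] {μ : Measure α}
    [SFinite μ] (hB : ∀ i, MeasurableSet (B i)) {I : Set α}
    (hI : ∀ x ∈ I, μ (cell B x) = 0) :
    ∀ᵐ p ∂(μ.restrict I).prod (μ.restrict I), p.2 ∉ cell B p.1 := by
  have hC := measurableSet_setOf_mem_cell hB
  rw [Measure.ae_prod_iff_ae_ae (p := fun p => p.2 ∉ cell B p.1) hC.compl]
  have hnull : ∀ᵐ x ∂μ.restrict I, μ.restrict I (cell B x) = 0 := by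
    rw [ae_restrict_iff (p := fun x => μ.restrict I (cell B x) = 0)
      (measurableSet_eq_fun (measurable_measure_prodMk_left hC) measurable_const)]
    exact ae_of_all _ fun x hx =>
      nonpos_iff_eq_zero.1 ((Measure.restrict_apply_le I _).trans (hI x hx).le)
  filter_upwards [hnull] with x hx
  exact measure_eq_zero_iff_ae_notMem.1 hx

end Cells

section Approximation

variable {α : Type*} [MeasurableSpace α] {μ : Measure α}

lemma exists_seq_forall_mem_closure {β X : Type*} [TopologicalSpace X]
    [SecondCountableTopology X] (f : β → X) {D : Set β} (hD : D.Nonempty) :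
    ∃ a : ℕ → β, (∀ n, a n ∈ D) ∧
      ∀ x ∈ D, f x ∈ closure (range fun n => f (a n)) := by
  have : Nonempty (f '' D) := (hD.image f).to_subtype
  obtain ⟨u, hu⟩ := TopologicalSpace.exists_dense_seq (f '' D)
  choose a haD hfa using fun n => (u n).2
  refine ⟨a, haD, fun x hx => ?_⟩
  have hval : Subtype.val ∘ u = fun n => f (a n) := funext fun n => (hfa n).symm
  simpa only [← range_comp, hval] using closure_subtype.1 (hu ⟨f x, mem_image_of_mem f hx⟩)

lemma exists_ae_eq_of_measurableSet_generateFrom {m : MeasurableSpace α} {𝒞 : Set (Set α)}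
    (h : ∀ s ∈ 𝒞, ∃ t, MeasurableSet[m] t ∧ s =ᵐ[μ] t) {s : Set α}
    (hs : MeasurableSet[generateFrom 𝒞] s) : ∃ t, MeasurableSet[m] t ∧ s =ᵐ[μ] t := by
  induction s, hs using generateFrom_induction with
  | hC s hs => exact h s hs
  | empty => exact ⟨∅, @MeasurableSet.empty _ m, ae_eq_rfl⟩
  | compl _ _ ih =>
    obtain ⟨t, ht, hst⟩ := ih
    exact ⟨tᶜ, ht.compl, hst.compl⟩
  | iUnion _ _ ih =>
    choose t ht hst using ih
    exact ⟨⋃ n, t n, .iUnion ht, Filter.EventuallyEq.countable_iUnion hst⟩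

/-- `A` is a.e. equal to the union of the `B i` lying a.e. below it or to the intersection of
those lying a.e. above it: a strict gap between the two would contain some `μ (B i)`. -/
lemma exists_ae_eq_of_mem_closure [IsFiniteMeasure μ] {ι : Type*} [Countable ι]
    {B : ι → Set α} (hB : ∀ i, MeasurableSet (B i)) {A : Set α} (hA : NullMeasurableSet A μ)
    (hcomp : ∀ i, B i ≤ᵐ[μ] A ∨ A ≤ᵐ[μ] B i)
    (hdense : μ A ∈ closure (range fun i => μ (B i))) :
    ∃ E, MeasurableSet[generateFrom (range B)] E ∧ A =ᵐ[μ] E := by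
  set K₁ := {i | B i ≤ᵐ[μ] A}
  set K₂ := {i | A ≤ᵐ[μ] B i}
  have hE₁ : MeasurableSet[generateFrom (range B)] (⋃ i ∈ K₁, B i) :=
    .biUnion (to_countable _) fun i _ => measurableSet_generateFrom (mem_range_self i)
  have hE₂ : MeasurableSet[generateFrom (range B)] (⋂ i ∈ K₂, B i) :=
    .biInter (to_countable _) fun i _ => measurableSet_generateFrom (mem_range_self i)
  have h₁ : ⋃ i ∈ K₁, B i ≤ᵐ[μ] A := by
    filter_upwards [(ae_ball_iff (to_countable K₁)).2 fun i hi => hi] with x hx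
    rintro ⟨_, ⟨i, rfl⟩, _, ⟨hi, rfl⟩, hxi⟩
    exact hx i hi hxi
  have h₂ : A ≤ᵐ[μ] ⋂ i ∈ K₂, B i := by
    filter_upwards [(ae_ball_iff (to_countable K₂)).2 fun i hi => hi] with x hx hxA
    exact mem_iInter₂.2 fun i hi => hx i hi hxA
  have hgap : μ A ≤ μ (⋃ i ∈ K₁, B i) ∨ μ (⋂ i ∈ K₂, B i) ≤ μ A := by
    by_contra! h
    obtain ⟨_, ⟨hlo, hhi⟩, i, rfl⟩ := mem_closure_iff.1 hdense _ isOpen_Ioo h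
    rcases hcomp i with hi | hi
    · exact hlo.not_ge (measure_mono (subset_biUnion_of_mem (u := B) hi))
    · exact hhi.not_ge (measure_mono (biInter_subset_of_mem (t := B) hi))
  have hle : generateFrom (range B) ≤ ‹MeasurableSpace α› :=
    generateFrom_le (forall_mem_range.2 hB)
  rcases hgap with h | h
  · exact ⟨_, hE₁, (ae_eq_of_ae_subset_of_measure_ge h₁ h
      (hle _ hE₁).nullMeasurableSet (measure_ne_top μ A)).symm⟩
  · exact ⟨_, hE₂, ae_eq_of_ae_subset_of_measure_ge h₂ h hA (measure_ne_top μ _)⟩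

end Approximation

section Tournament

variable {S : Type*} [MeasurableSpace S] {μ : Measure S} {W : S → S → ℝ}

def IsDominant (μ : Measure S) (W : S → S → ℝ) (B : Set S) : Prop :=
  MeasurableSet B ∧ KPrec μ W B Bᶜ

lemma kPrec_empty_left (A : Set S) : KPrec μ W ∅ A :=
  Eventually.of_forall fun _ h => h.elim

lemma KPrec.union_right_s17 {A B C : Set S} (hB : KPrec μ W A B) (hC : KPrec μ W A C) :
    KPrec μ W A (B ∪ C) := by
  filter_upwards [hB, hC] with p hB hC hA hBC
  exact hBC.elim (hB hA) (hC hA)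

lemma KPrec.union_left_s17 {A B C : Set S} (hA : KPrec μ W A C) (hB : KPrec μ W B C) :
    KPrec μ W (A ∪ B) C := by
  filter_upwards [hA, hB] with p hA hB hAB hC
  exact hAB.elim (hA · hC) (hB · hC)

lemma KPrec.ae_swap [SFinite μ] {A C : Set S} (h : KPrec μ W A C) :
    ∀ᵐ p ∂μ.prod μ, p.2 ∈ A → p.1 ∈ C → W p.2 p.1 = 1 :=
  Measure.measurePreserving_swap.quasiMeasurePreserving.ae h

lemma isDominant_empty : IsDominant μ W ∅ :=
  ⟨.empty, kPrec_empty_left _⟩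

lemma IsDominant.memZ {B : Set S} (hB : IsDominant μ W B) : memZ μ W B :=
  ⟨hB.1, ∅, Bᶜ, .empty, hB.1.compl, empty_union _, empty_inter _, kPrec_empty_left _, hB.2,
    kPrec_empty_left _⟩

lemma memZ.exists_isDominant_diff {A : Set S} (hA : memZ μ W A) :
    ∃ B C, IsDominant μ W B ∧ IsDominant μ W C ∧ A = C \ B := by
  obtain ⟨hAm, B, C, hBm, -, hBC, hBC_disj, hBA, hAC, hBC'⟩ := hA
  have hmem : ∀ x, (x ∈ B ∨ x ∈ C ↔ x ∉ A) ∧ ¬ (x ∈ B ∧ x ∈ C) := fun x =>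
    ⟨by rw [← mem_union, hBC, mem_compl_iff], fun h => (hBC_disj.subset h).elim⟩
  have hB_compl : Bᶜ = A ∪ C := by
    ext x; have := hmem x; simp only [mem_compl_iff, mem_union]; tauto
  have hBA_compl : (B ∪ A)ᶜ = C := by
    ext x; have := hmem x; simp only [mem_compl_iff, mem_union]; tauto
  refine ⟨B, B ∪ A, ⟨hBm, hB_compl ▸ hBA.union_right_s17 hBC'⟩,
    ⟨hBm.union hAm, hBA_compl ▸ hBC'.union_left_s17 hAC⟩, ?_⟩
  ext x; have := hmem x; simp only [Set.mem_sdiff, mem_union]; tauto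

lemma IsDominant.ae_eq_zero [SFinite μ] (hsum : ∀ᵐ p ∂μ.prod μ, W p.1 p.2 + W p.2 p.1 = 1)
    {B : Set S} (hB : IsDominant μ W B) :
    ∀ᵐ p ∂μ.prod μ, p.2 ∈ B → p.1 ∉ B → W p.1 p.2 = 0 := by
  filter_upwards [hB.2.ae_swap, hsum] with p h hp h₂ h₁
  linarith [h h₂ h₁]

lemma IsDominant.ae_le_or_ae_le [SFinite μ]
    (hsum : ∀ᵐ p ∂μ.prod μ, W p.1 p.2 + W p.2 p.1 = 1) {B B' : Set S}
    (hB : IsDominant μ W B) (hB' : IsDominant μ W B') : B ≤ᵐ[μ] B' ∨ B' ≤ᵐ[μ] B := by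
  have h : μ.prod μ ((B \ B') ×ˢ (B' \ B)) = 0 := by
    rw [measure_eq_zero_iff_ae_notMem]
    filter_upwards [hB.2, hB'.2.ae_swap, hsum] with p h h' hp
    rintro ⟨⟨h₁B, h₁B'⟩, h₂B', h₂B⟩
    linarith [h h₁B h₂B, h' h₂B' h₁B']
  rwa [Measure.prod_prod, mul_eq_zero, ← ae_le_set, ← ae_le_set] at h

lemma ae_weaklyAbove_of_ne_zero [SFinite μ]
    (hsum : ∀ᵐ p ∂μ.prod μ, W p.1 p.2 + W p.2 p.1 = 1) {ι : Type*} [Countable ι]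
    {B : ι → Set S} (hB : ∀ i, IsDominant μ W (B i)) :
    ∀ᵐ p ∂μ.prod μ, W p.1 p.2 ≠ 0 → WeaklyAbove B p.1 p.2 := by
  filter_upwards [ae_all_iff.2 fun i => (hB i).ae_eq_zero hsum] with p hp hne i hi
  by_contra hi'
  exact hne (hp i hi hi')

theorem exists_isDominant_seq_ae_eq [IsFiniteMeasure μ]
    (hsum : ∀ᵐ p ∂μ.prod μ, W p.1 p.2 + W p.2 p.1 = 1) :
    ∃ B : ℕ → Set S, (∀ n, IsDominant μ W (B n)) ∧
      ∀ A, MeasurableSet[generateFrom {A | memZ μ W A}] A →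
        ∃ E, MeasurableSet[generateFrom (range B)] E ∧ A =ᵐ[μ] E := by
  obtain ⟨B, hB, hdense⟩ :=
    exists_seq_forall_mem_closure μ (D := {A | IsDominant μ W A}) ⟨∅, isDominant_empty⟩
  have happrox (A : Set S) (hA : IsDominant μ W A) :
      ∃ E, MeasurableSet[generateFrom (range B)] E ∧ A =ᵐ[μ] E :=
    exists_ae_eq_of_mem_closure (fun n => (hB n).1) hA.1.nullMeasurableSet
      (fun n => (hB n).ae_le_or_ae_le hsum hA) (hdense A hA)
  refine ⟨B, hB, fun A hA => exists_ae_eq_of_measurableSet_generateFrom ?_ hA⟩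
  intro A hA
  obtain ⟨C, D, hC, hD, rfl⟩ := hA.exists_isDominant_diff
  obtain ⟨E, hE, hCE⟩ := happrox C hC
  obtain ⟨F, hF, hDF⟩ := happrox D hD
  exact ⟨F \ E, hF.diff hE, hDF.diff hCE⟩

end Tournament

/-- On the non-atomic part `I` of `(S, σ(Z), μ)`, the cyclic integral
`∫_{I×I×I} W(x,y) W(y,z) W(z,x) dμ³` vanishes; in particular, if `μ(I) > 0`, the
restricted kernel `W|_I` (with the normalized measure) satisfies `t(C₃, W|_I) = 0`. -/
theorem stmt17 {S : Type*} [MeasurableSpace S] (μ : Measure S) [IsProbabilityMeasure μ]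
    (W : S → S → ℝ) (hW : IsTournamentKernel μ W) (I : Set S)
    (hI : I = nonAtomicPart (MeasurableSpace.generateFrom {B : Set S | memZ μ W B}) μ) :
    (∫ x in I, ∫ y in I, ∫ z in I, W x y * W y z * W z x ∂μ ∂μ ∂μ) = 0 ∧
    (0 < μ I →
      (∫ x, ∫ y, ∫ z, W x y * W y z * W z x
        ∂((μ I)⁻¹ • μ.restrict I) ∂((μ I)⁻¹ • μ.restrict I)
          ∂((μ I)⁻¹ • μ.restrict I)) = 0) := by
  obtain ⟨-, -, hsum⟩ := hW
  obtain ⟨B, hB, happrox⟩ := exists_isDominant_seq_ae_eq hsum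
  have hcell : ∀ x ∈ I, μ (cell B x) = 0 := by
    intro x hx
    by_contra h
    rw [hI] at hx
    exact hx ⟨_, isAtomOf_cell (fun n => measurableSet_generateFrom (hB n).memZ) happrox
      (pos_iff_ne_zero.2 h), mem_cell_self x⟩
  have hac : μ.restrict I ≪ μ := Measure.restrict_le_self.absolutelyContinuous
  have h_int : ∫ x in I, ∫ y in I, ∫ z in I, W x y * W y z * W z x ∂μ ∂μ ∂μ = 0 := by
    refine integral_cycle_eq_zero_of_ae_prod (r := WeaklyAbove B) ?_
    filter_upwards [(hac.prod hac).ae_le (ae_weaklyAbove_of_ne_zero hsum hB),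
      ae_restrict_prod_notMem_cell (fun n => (hB n).1) hcell] with p hne hcell
    exact ⟨hne, fun h => hcell (mem_cell_of_weaklyAbove h.1 h.2)⟩
  refine ⟨h_int, fun _ => ?_⟩
  simp only [integral_smul_measure, integral_smul, h_int, smul_zero]
end
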